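/- arXiv:0909.4696 — 3 statements merged into one kernel-verified Lean document; each statement's English description precedes it below -/
import Mathlib

section
/- (Integration-by-parts identity for the second variation.) Let Ω ⊆ ℝⁿ be a bounded smooth domain, let V : ℝⁿ → ℝ be continuous on a neighborhood of the closure of Ω, let c : ℝⁿ → ℝ be C∞ on an open neighborhood of the closure of Ω, and let η : ℝⁿ → ℝ be Lipschitz with η = 0 on frontier Ω. Then ∫_Ω ( ‖∇(cη)(x)‖² − V(x)(c(x)η(x))² ) dx = ∫_Ω ( c(x)² ‖∇η(x)‖² − (Δc(x) + V(x)c(x)) c(x) η(x)² ) dx, where Δ is the Euclidean Laplacian (trace of the Hessian). In the application, V = f'∘u for a classical solution u of −Δu = f(u), so the left side is the second variation of energy Q_u(cη). -/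
open MeasureTheory Filter

noncomputable section

/-- The Euclidean Laplacian: trace of the Hessian. -/
def lapl {n : ℕ} (u : EuclideanSpace ℝ (Fin n) → ℝ) (x : EuclideanSpace ℝ (Fin n)) : ℝ :=
  ∑ i : Fin n, fderiv ℝ (fun y => fderiv ℝ u y (EuclideanSpace.single i 1)) x
    (EuclideanSpace.single i 1)

/-- Entries of the Hessian matrix. -/
def hess {n : ℕ} (u : EuclideanSpace ℝ (Fin n) → ℝ) (x : EuclideanSpace ℝ (Fin n))
    (i j : Fin n) : ℝ :=
  fderiv ℝ (fun y => fderiv ℝ u y (EuclideanSpace.single j 1)) x (EuclideanSpace.single i 1)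

/-- A bounded smooth domain of ℝⁿ. -/
def IsSmoothBoundedDomain {n : ℕ} (Ω : Set (EuclideanSpace ℝ (Fin n))) : Prop :=
  IsOpen Ω ∧ Bornology.IsBounded Ω ∧ Ω.Nonempty ∧
  ∃ ρ : EuclideanSpace ℝ (Fin n) → ℝ, ContDiff ℝ (⊤ : ℕ∞) ρ ∧
    Ω = {x | ρ x < 0} ∧ frontier Ω = {x | ρ x = 0} ∧
    ∀ x ∈ frontier Ω, gradient ρ x ≠ 0

/-- Classical solution of −Δu = f(u) in Ω, u = 0 on ∂Ω. -/
def IsClassicalSol {n : ℕ} (Ω : Set (EuclideanSpace ℝ (Fin n))) (f : ℝ → ℝ)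
    (u : EuclideanSpace ℝ (Fin n) → ℝ) : Prop :=
  (∃ U, IsOpen U ∧ closure Ω ⊆ U ∧ ContDiffOn ℝ 2 u U) ∧
  (∀ x ∈ Ω, lapl u x + f (u x) = 0) ∧
  (∀ x ∈ frontier Ω, u x = 0)

/-- Semi-stability of a solution u. -/
def IsSemiStable {n : ℕ} (Ω : Set (EuclideanSpace ℝ (Fin n))) (f : ℝ → ℝ)
    (u : EuclideanSpace ℝ (Fin n) → ℝ) : Prop :=
  ∀ ξ : EuclideanSpace ℝ (Fin n) → ℝ, (∃ K : NNReal, LipschitzWith K ξ) →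
    (∀ x ∈ frontier Ω, ξ x = 0) →
    0 ≤ ∫ x in Ω, (‖gradient ξ x‖ ^ 2 - deriv f (u x) * ξ x ^ 2)

/-- Weak solution of −Δu = f(u) in Ω, u = 0 on ∂Ω. -/
def IsWeakSol {n : ℕ} (Ω : Set (EuclideanSpace ℝ (Fin n))) (f : ℝ → ℝ)
    (u : EuclideanSpace ℝ (Fin n) → ℝ) : Prop :=
  IntegrableOn u Ω volume ∧
  IntegrableOn (fun x => f (u x) * Metric.infDist x (frontier Ω)) Ω volume ∧
  ∀ ξ : EuclideanSpace ℝ (Fin n) → ℝ,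
    (∃ U, IsOpen U ∧ closure Ω ⊆ U ∧ ContDiffOn ℝ 2 ξ U) →
    (∀ x ∈ frontier Ω, ξ x = 0) →
    ∫ x in Ω, (u x * lapl ξ x + f (u x) * ξ x) = 0


open Metric Set Topology
open scoped Manifold
set_option linter.unusedSectionVars false
set_option linter.style.longLine false
set_option maxHeartbeats 1000000

section Aux

theorem integral_fderiv_apply_eq_zero {n : ℕ} {g : EuclideanSpace ℝ (Fin n) → ℝ} {K : NNReal}
    (hlip : LipschitzWith K g) (hsupp : HasCompactSupport g) (v : EuclideanSpace ℝ (Fin n)) :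
    ∫ x, fderiv ℝ g x v = 0 := by
  have hcont : Continuous g := hlip.continuous
  have hint : Integrable g := hcont.integrable_of_hasCompactSupport hsupp
  set t : ℕ → ℝ := fun k => ((k : ℝ) + 1)⁻¹ with ht
  have htpos : ∀ k, 0 < t k := fun k => by positivity
  set F : ℕ → EuclideanSpace ℝ (Fin n) → ℝ := fun k x => (t k)⁻¹ * (g (x + t k • v) - g x) with hF
  -- each integral is zero
  have hintk : ∀ k, Integrable (fun x => g (x + t k • v)) volume := fun k => by
    simpa using hint.comp_add_right (t k • v)
  have hIk : ∀ k, ∫ x, F k x = 0 := by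
    intro k
    have : ∫ x, F k x = (t k)⁻¹ * ((∫ x, g (x + t k • v)) - ∫ x, g x) := by
      rw [← integral_sub (hintk k) hint, ← integral_const_mul]
    rw [this, integral_add_right_eq_self g (t k • v)]
    simp
  -- convergence a.e.
  have hrad : ∀ᵐ x : EuclideanSpace ℝ (Fin n), DifferentiableAt ℝ g x := hlip.ae_differentiableAt
  have hconv : ∀ᵐ x : EuclideanSpace ℝ (Fin n), Tendsto (fun k => F k x) atTop (𝓝 (fderiv ℝ g x v)) := by
    filter_upwards [hrad] with x hx
    have hline : ∀ s : ℝ, HasDerivAt (fun r : ℝ => x + r • v) v s := by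
      intro s
      simpa using ((hasDerivAt_id s).smul_const v).const_add x
    have hφ : HasDerivAt (fun r : ℝ => g (x + r • v)) (fderiv ℝ g x v) 0 := by
      have hfd : HasFDerivAt g (fderiv ℝ g x) (x + (0:ℝ) • v) := by
        simpa using hx.hasFDerivAt
      have := hfd.comp_hasDerivAt 0 (hline 0)
      exact this
    have hslope := hasDerivAt_iff_tendsto_slope.1 hφ
    have htt : Tendsto t atTop (𝓝[≠] (0:ℝ)) := by
      apply tendsto_nhdsWithin_of_tendsto_nhds_of_eventually_within
      · simpa [ht, one_div] using tendsto_one_div_add_atTop_nhds_zero_nat (𝕜 := ℝ)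
      · exact Eventually.of_forall fun k => (htpos k).ne'
    have := hslope.comp htt
    refine this.congr fun k => ?_
    simp only [Function.comp, slope_def_field, F]
    rw [div_eq_inv_mul]
    simp [sub_zero]
  -- domination
  set C : Set (EuclideanSpace ℝ (Fin n)) := Metric.cthickening ‖v‖ (tsupport g) with hC
  have hCcomp : IsCompact C := hsupp.cthickening
  have hbound : ∀ k, ∀ᵐ x : EuclideanSpace ℝ (Fin n), ‖F k x‖ ≤ C.indicator (fun _ => (K : ℝ) * ‖v‖) x := by
    intro k
    refine Eventually.of_forall fun x => ?_
    by_cases hx : x ∈ C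
    · rw [Set.indicator_of_mem hx]
      have h1 : |g (x + t k • v) - g x| ≤ (K:ℝ) * ‖t k • v‖ := by
        have := hlip.dist_le_mul (x + t k • v) x
        rw [Real.dist_eq] at this
        simpa [dist_eq_norm] using this
      have : ‖F k x‖ = (t k)⁻¹ * |g (x + t k • v) - g x| := by
        rw [hF]
        simp [Real.norm_eq_abs, abs_mul, abs_inv, abs_of_pos (htpos k)]
      rw [this]
      rw [norm_smul] at h1
      calc (t k)⁻¹ * |g (x + t k • v) - g x| ≤ (t k)⁻¹ * ((K:ℝ) * (‖t k‖ * ‖v‖)) := by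
            gcongr
        _ = (K:ℝ) * ‖v‖ := by
            rw [Real.norm_eq_abs, abs_of_pos (htpos k)]
            rw [mul_left_comm, inv_mul_cancel_left₀ (htpos k).ne']
    · rw [Set.indicator_of_notMem hx]
      have hxs : x ∉ tsupport g := fun h => hx (Metric.self_subset_cthickening _ h)
      have hxs2 : x + t k • v ∉ tsupport g := by
        intro h
        apply hx
        refine Metric.mem_cthickening_of_dist_le x (x + t k • v) _ _ h ?_
        have e : x - (x + t k • v) = -(t k • v) := by abel
        rw [dist_eq_norm, e, norm_neg, norm_smul, Real.norm_eq_abs, abs_of_pos (htpos k)]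
        have : t k ≤ 1 := by
          rw [ht]
          rw [inv_le_one_iff₀]
          right; push_cast; linarith
        nlinarith [norm_nonneg v, htpos k]
      have e1 : g x = 0 := image_eq_zero_of_notMem_tsupport hxs
      have e2 : g (x + t k • v) = 0 := image_eq_zero_of_notMem_tsupport hxs2
      simp [hF, e1, e2]
  have hbint : Integrable (C.indicator (fun _ => (K : ℝ) * ‖v‖)) := by
    rw [integrable_indicator_iff hCcomp.measurableSet]
    exact integrableOn_const hCcomp.measure_lt_top.ne
  have hmeasF : ∀ k, AEStronglyMeasurable (F k) volume := by
    intro k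
    exact (Continuous.aestronglyMeasurable (by continuity))
  have hmeaslim : AEStronglyMeasurable (fun x => fderiv ℝ g x v) volume :=
    (measurable_fderiv_apply_const ℝ g v).aestronglyMeasurable
  have := tendsto_integral_of_dominated_convergence _ hmeasF hbint hbound hconv
  have h0 : Tendsto (fun k => ∫ x, F k x) atTop (𝓝 (0:ℝ)) := by
    simpa [hIk] using tendsto_const_nhds (x := (0:ℝ)) (f := atTop (α := ℕ))
  exact tendsto_nhds_unique this h0


theorem lipschitz_indicator_of_vanish {E : Type*} [NormedAddCommGroup E] [NormedSpace ℝ E]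
    [FiniteDimensional ℝ E] {Ω : Set E} (hne : Ω ≠ univ) {K : NNReal} {η : E → ℝ}
    (hη : LipschitzWith K η) (h0 : ∀ x ∈ frontier Ω, η x = 0) :
    LipschitzWith K (Ω.indicator η) := by
  have key : ∀ x ∈ Ω, ∀ y ∉ Ω, |η x| ≤ (K : ℝ) * dist x y := by
    intro x hx y hy
    obtain ⟨z, hzf, hzd⟩ := exists_mem_frontier_infDist_compl_eq_dist hx hne
    have h1 : |η x| ≤ (K:ℝ) * dist x z := by
      have := hη.dist_le_mul x z
      rw [Real.dist_eq, h0 z hzf, sub_zero] at this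
      exact this
    have h2 : dist x z ≤ dist x y := by
      rw [← hzd]
      exact Metric.infDist_le_dist_of_mem hy
    calc |η x| ≤ (K:ℝ) * dist x z := h1
      _ ≤ (K:ℝ) * dist x y := by gcongr
  apply LipschitzWith.of_dist_le_mul
  intro x y
  by_cases hx : x ∈ Ω <;> by_cases hy : y ∈ Ω
  · rw [indicator_of_mem hx, indicator_of_mem hy]; exact hη.dist_le_mul x y
  · rw [indicator_of_mem hx, indicator_of_notMem hy, Real.dist_eq, sub_zero]
    exact key x hx y hy
  · rw [indicator_of_notMem hx, indicator_of_mem hy, Real.dist_eq]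
    rw [abs_sub_comm, sub_zero, dist_comm]
    exact key y hy x hx
  · rw [indicator_of_notMem hx, indicator_of_notMem hy]
    simp only [dist_self]
    positivity

theorem hasFDerivAt_zero_of_sq_bound {E : Type*} [NormedAddCommGroup E] [NormedSpace ℝ E]
    {f : E → ℝ} {x : E} {C : ℝ} (h : ∀ y, |f y| ≤ C * ‖y - x‖ ^ 2) :
    HasFDerivAt f (0 : E →L[ℝ] ℝ) x := by
  have hfx : f x = 0 := by
    have := h x
    simpa using this
  rw [hasFDerivAt_iff_isLittleO_nhds_zero]
  have hO : (fun u : E => f (x + u) - f x - (0 : E →L[ℝ] ℝ) u) =O[𝓝 0]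
      (fun u : E => ‖u‖ * ‖u‖) := by
    apply Asymptotics.IsBigO.of_bound |C|
    refine Eventually.of_forall fun u => ?_
    have e : x + u - x = u := by abel
    have h3 := h (x + u)
    rw [e] at h3
    have hnn : (0:ℝ) ≤ ‖u‖ * ‖u‖ := mul_self_nonneg _
    simp only [hfx, sub_zero, ContinuousLinearMap.zero_apply, Real.norm_eq_abs]
    rw [abs_of_nonneg hnn]
    nlinarith [le_abs_self C, abs_nonneg (f (x+u)), sq_nonneg ‖u‖]
  refine hO.trans_isLittleO ?_
  have h1 : (fun u : E => ‖u‖) =o[𝓝 0] (fun _ : E => (1:ℝ)) := by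
    rw [Asymptotics.isLittleO_one_iff]
    simpa using continuous_norm.tendsto (0:E)
  have h2 := h1.mul_isBigO (Asymptotics.isBigO_refl (fun u : E => ‖u‖) (𝓝 0))
  exact Asymptotics.isLittleO_norm_right.1 (by simpa using h2)


theorem exists_smooth_cutoff {n : ℕ} {K U : Set (EuclideanSpace ℝ (Fin n))}
    (hK : IsCompact K) (hU : IsOpen U) (hKU : K ⊆ U) :
    ∃ (χ : EuclideanSpace ℝ (Fin n) → ℝ) (W : Set (EuclideanSpace ℝ (Fin n))),
      ContDiff ℝ (⊤ : ℕ∞) χ ∧ HasCompactSupport χ ∧ tsupport χ ⊆ U ∧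
      IsOpen W ∧ K ⊆ W ∧ ∀ x ∈ W, χ x = 1 := by
  obtain ⟨δ, hδpos, hδ⟩ := hK.exists_cthickening_subset_open hU hKU
  have hs : IsClosed (Metric.thickening δ K)ᶜ := (Metric.isOpen_thickening).isClosed_compl
  have ht : IsClosed (Metric.cthickening (δ/2) K) := Metric.isClosed_cthickening
  have hd : Disjoint (Metric.thickening δ K)ᶜ (Metric.cthickening (δ/2) K) := by
    rw [disjoint_comm, Set.disjoint_compl_right_iff_subset]
    exact Metric.cthickening_subset_thickening' hδpos (half_lt_self hδpos) K
  obtain ⟨f, hf0, hf1, hf01⟩ := exists_contMDiffMap_zero_one_of_isClosed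
    (𝓘(ℝ, EuclideanSpace ℝ (Fin n))) (n := (⊤ : ℕ∞)) hs ht hd
  have hts : tsupport (⇑f) ⊆ Metric.cthickening δ K := by
    refine (closure_minimal ?_ Metric.isClosed_cthickening)
    intro x hx
    by_contra hxc
    have : x ∈ (Metric.thickening δ K)ᶜ := fun hmem =>
      hxc (Metric.thickening_subset_cthickening δ K hmem)
    exact hx (hf0 this)
  refine ⟨f, Metric.thickening (δ/2) K, ?_, ?_, subset_trans hts hδ,
    Metric.isOpen_thickening, Metric.self_subset_thickening (half_pos hδpos) K, ?_⟩
  · exact contMDiff_iff_contDiff.1 f.contMDiff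
  · exact HasCompactSupport.of_support_subset_isCompact (hK.cthickening)
      (subset_trans subset_closure hts)
  · intro x hx
    exact hf1 (Metric.thickening_subset_cthickening _ K hx)



theorem gradient_coord {n : ℕ} (f : EuclideanSpace ℝ (Fin n) → ℝ) (x : EuclideanSpace ℝ (Fin n))
    (i : Fin n) : gradient f x i = fderiv ℝ f x (EuclideanSpace.single i (1:ℝ)) := by
  have h1 : (inner ℝ (gradient f x) (EuclideanSpace.single i (1:ℝ)) : ℝ)
      = fderiv ℝ f x (EuclideanSpace.single i (1:ℝ)) := by
    rw [gradient]
    exact InnerProductSpace.toDual_symm_apply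
  rw [← h1, EuclideanSpace.inner_single_right]
  simp

theorem inner_gradients {n : ℕ} (f g : EuclideanSpace ℝ (Fin n) → ℝ)
    (x : EuclideanSpace ℝ (Fin n)) :
    (inner ℝ (gradient f x) (gradient g x) : ℝ)
      = ∑ i : Fin n, fderiv ℝ f x (EuclideanSpace.single i (1:ℝ))
          * fderiv ℝ g x (EuclideanSpace.single i (1:ℝ)) := by
  rw [PiLp.inner_apply]
  refine Finset.sum_congr rfl fun i _ => ?_
  rw [← gradient_coord, ← gradient_coord]
  simp [RCLike.inner_apply, mul_comm]

theorem norm_gradient_sq {n : ℕ} (f : EuclideanSpace ℝ (Fin n) → ℝ)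
    (x : EuclideanSpace ℝ (Fin n)) :
    ‖gradient f x‖ ^ 2 = ∑ i : Fin n, (fderiv ℝ f x (EuclideanSpace.single i (1:ℝ))) ^ 2 := by
  rw [← real_inner_self_eq_norm_sq, inner_gradients]
  exact Finset.sum_congr rfl fun i _ => (sq _).symm


/-- bounded Lipschitz predicate -/
def BL {E : Type*} [NormedAddCommGroup E] (f : E → ℝ) : Prop :=
  ∃ (K M : NNReal), LipschitzWith K f ∧ ∀ x, |f x| ≤ (M : ℝ)

theorem lipschitzWith_mul_bdd' {E : Type*} [NormedAddCommGroup E] {f g : E → ℝ}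
    {Kf Kg Mf Mg : NNReal}
    (hf : LipschitzWith Kf f) (hg : LipschitzWith Kg g)
    (hMf : ∀ x, |f x| ≤ (Mf : ℝ)) (hMg : ∀ x, |g x| ≤ (Mg : ℝ)) :
    LipschitzWith (Kf * Mg + Mf * Kg) (fun x => f x * g x) := by
  apply LipschitzWith.of_dist_le_mul
  intro x y
  have h1 : dist (f x) (f y) ≤ (Kf : ℝ) * dist x y := hf.dist_le_mul x y
  have h2 : dist (g x) (g y) ≤ (Kg : ℝ) * dist x y := hg.dist_le_mul x y
  have e : f x * g x - f y * g y = (f x - f y) * g x + f y * (g x - g y) := by ring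
  rw [Real.dist_eq, e]
  rw [Real.dist_eq] at h1 h2
  have hd : (0:ℝ) ≤ dist x y := dist_nonneg
  calc |(f x - f y) * g x + f y * (g x - g y)|
      ≤ |f x - f y| * |g x| + |f y| * |g x - g y| := by
        simpa [abs_mul] using abs_add_le ((f x - f y) * g x) (f y * (g x - g y))
    _ ≤ ((Kf:ℝ) * dist x y) * Mg + (Mf:ℝ) * ((Kg:ℝ) * dist x y) := by
        have := hMg x
        have := hMf y
        nlinarith [abs_nonneg (f x - f y), abs_nonneg (g x - g y), abs_nonneg (f y),
          abs_nonneg (g x), NNReal.coe_nonneg Mf, NNReal.coe_nonneg Mg,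
          mul_le_mul h1 (hMg x) (abs_nonneg _) (by positivity : (0:ℝ) ≤ (Kf:ℝ)*dist x y),
          mul_le_mul (hMf y) h2 (abs_nonneg _) (NNReal.coe_nonneg Mf)]
    _ = ((Kf * Mg + Mf * Kg : NNReal) : ℝ) * dist x y := by push_cast; ring

theorem BL.mul {E : Type*} [NormedAddCommGroup E] {f g : E → ℝ} (hf : BL f) (hg : BL g) :
    BL (fun x => f x * g x) := by
  obtain ⟨Kf, Mf, hf1, hf2⟩ := hf
  obtain ⟨Kg, Mg, hg1, hg2⟩ := hg
  refine ⟨Kf * Mg + Mf * Kg, Mf * Mg, lipschitzWith_mul_bdd' hf1 hg1 hf2 hg2, fun x => ?_⟩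
  rw [abs_mul]
  push_cast
  exact mul_le_mul (hf2 x) (hg2 x) (abs_nonneg _) (NNReal.coe_nonneg Mf)

theorem BL.of_continuous_hasCompactSupport {E : Type*} [NormedAddCommGroup E]
    {f : E → ℝ} (hf : Continuous f) (hK : ∃ K : NNReal, LipschitzWith K f)
    (hs : HasCompactSupport f) : BL f := by
  obtain ⟨K, hK⟩ := hK
  obtain ⟨C, hC⟩ := hs.exists_bound_of_continuous hf
  refine ⟨K, Real.toNNReal C, hK, fun x => ?_⟩
  calc |f x| ≤ C := by simpa [Real.norm_eq_abs] using hC x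
    _ ≤ Real.toNNReal C := Real.le_coe_toNNReal C

theorem lipschitz_of_smooth_cs {E : Type*} [NormedAddCommGroup E] [NormedSpace ℝ E]
    {f : E → ℝ} (hf : ContDiff ℝ (⊤:ℕ∞) f) (hs : HasCompactSupport f) :
    ∃ K : NNReal, LipschitzWith K f := by
  have hdf : Continuous (fderiv ℝ f) := (hf.fderiv_right (m := (⊤:ℕ∞)) (by exact_mod_cast le_top)).continuous
  obtain ⟨C, hC⟩ := (hs.fderiv ℝ).exists_bound_of_continuous hdf
  refine ⟨Real.toNNReal C, lipschitzWith_of_nnnorm_fderiv_le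
    (hf.differentiable (by simp)) fun x => ?_⟩
  have : ‖fderiv ℝ f x‖ ≤ C := hC x
  rw [← norm_toNNReal]
  exact Real.toNNReal_le_toNNReal this



theorem pointwise_product_rule {n : ℕ} {c η : EuclideanSpace ℝ (Fin n) → ℝ}
    {x : EuclideanSpace ℝ (Fin n)} (hc : DifferentiableAt ℝ c x)
    (hη : DifferentiableAt ℝ η x) :
    ‖gradient (fun y => c y * η y) x‖ ^ 2
      = c x ^ 2 * ‖gradient η x‖ ^ 2
        + 2 * (c x * η x) * (∑ i : Fin n, fderiv ℝ c x (EuclideanSpace.single i (1:ℝ))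
            * fderiv ℝ η x (EuclideanSpace.single i (1:ℝ)))
        + η x ^ 2 * (∑ i : Fin n, (fderiv ℝ c x (EuclideanSpace.single i (1:ℝ))) ^ 2) := by
  rw [norm_gradient_sq, norm_gradient_sq]
  have hD : ∀ i : Fin n, fderiv ℝ (fun y => c y * η y) x (EuclideanSpace.single i (1:ℝ))
      = c x * fderiv ℝ η x (EuclideanSpace.single i (1:ℝ))
        + η x * fderiv ℝ c x (EuclideanSpace.single i (1:ℝ)) := by
    intro i
    rw [fderiv_fun_mul hc hη]
    simp
  calc ∑ i : Fin n, (fderiv ℝ (fun y => c y * η y) x (EuclideanSpace.single i (1:ℝ)))^2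
      = ∑ i : Fin n, (c x ^2 * (fderiv ℝ η x (EuclideanSpace.single i (1:ℝ)))^2
          + 2 * (c x * η x) * (fderiv ℝ c x (EuclideanSpace.single i (1:ℝ))
             * fderiv ℝ η x (EuclideanSpace.single i (1:ℝ)))
          + η x ^2 * (fderiv ℝ c x (EuclideanSpace.single i (1:ℝ)))^2) := by
        refine Finset.sum_congr rfl fun i _ => ?_
        rw [hD i]; ring
    _ = _ := by
        rw [Finset.sum_add_distrib, Finset.sum_add_distrib, ← Finset.mul_sum,
          ← Finset.mul_sum, ← Finset.mul_sum]

theorem pointwise_divergence {n : ℕ} {c η : EuclideanSpace ℝ (Fin n) → ℝ}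
    {x : EuclideanSpace ℝ (Fin n)} (hc : ContDiff ℝ (⊤:ℕ∞) c)
    (hη : DifferentiableAt ℝ η x) :
    ∑ i : Fin n, fderiv ℝ (fun y => c y * η y ^ 2
          * fderiv ℝ c y (EuclideanSpace.single i (1:ℝ))) x (EuclideanSpace.single i (1:ℝ))
      = η x ^ 2 * ∑ i : Fin n, (fderiv ℝ c x (EuclideanSpace.single i (1:ℝ))) ^ 2
        + 2 * (c x * η x) * ∑ i : Fin n, fderiv ℝ c x (EuclideanSpace.single i (1:ℝ))
            * fderiv ℝ η x (EuclideanSpace.single i (1:ℝ))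
        + c x * η x ^ 2 * (∑ i : Fin n, fderiv ℝ (fun y => fderiv ℝ c y
            (EuclideanSpace.single i (1:ℝ))) x (EuclideanSpace.single i (1:ℝ))) := by
  have hcd : Differentiable ℝ c := hc.differentiable (by simp)
  have key : ∀ i : Fin n, fderiv ℝ (fun y => c y * η y ^ 2
        * fderiv ℝ c y (EuclideanSpace.single i (1:ℝ))) x (EuclideanSpace.single i (1:ℝ))
      = η x ^ 2 * (fderiv ℝ c x (EuclideanSpace.single i (1:ℝ)))^2
        + 2 * (c x * η x) * (fderiv ℝ c x (EuclideanSpace.single i (1:ℝ))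
            * fderiv ℝ η x (EuclideanSpace.single i (1:ℝ)))
        + c x * η x ^ 2 * fderiv ℝ (fun y => fderiv ℝ c y
            (EuclideanSpace.single i (1:ℝ))) x (EuclideanSpace.single i (1:ℝ)) := by
    intro i
    set v := EuclideanSpace.single i (1:ℝ) with hv
    have hDc : ContDiff ℝ (⊤:ℕ∞) (fun y => fderiv ℝ c y v) := by
      have h1 : ContDiff ℝ (⊤:ℕ∞) (fderiv ℝ c) := hc.fderiv_right (by exact_mod_cast le_top)
      exact (ContinuousLinearMap.apply ℝ ℝ v).contDiff.comp h1
    have hDcd : DifferentiableAt ℝ (fun y => fderiv ℝ c y v) x :=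
      (hDc.differentiable (by simp)) x
    have hsq : DifferentiableAt ℝ (fun y => η y ^ 2) x := by
      exact hη.pow 2
    have hcη2 : DifferentiableAt ℝ (fun y => c y * η y ^ 2) x := (hcd x).mul hsq
    have e1 : fderiv ℝ (fun y => c y * η y ^ 2 * fderiv ℝ c y v) x
        = (c x * η x ^ 2) • fderiv ℝ (fun y => fderiv ℝ c y v) x
          + fderiv ℝ c x v • fderiv ℝ (fun y => c y * η y ^ 2) x := fderiv_fun_mul hcη2 hDcd
    have e2 : fderiv ℝ (fun y => c y * η y ^ 2) x
        = c x • fderiv ℝ (fun y => η y ^ 2) x + η x ^ 2 • fderiv ℝ c x :=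
      fderiv_fun_mul (hcd x) hsq
    have e3 : fderiv ℝ (fun y => η y ^ 2) x = (2 * η x) • fderiv ℝ η x := by
      have : (fun y => η y ^ 2) = fun y => η y * η y := by funext y; ring
      rw [this, fderiv_fun_mul hη hη]
      ext w
      simp
      ring
    rw [e1]
    simp only [ContinuousLinearMap.add_apply, ContinuousLinearMap.smul_apply, smul_eq_mul]
    rw [e2]
    simp only [ContinuousLinearMap.add_apply, ContinuousLinearMap.smul_apply, smul_eq_mul]
    rw [e3]
    simp only [ContinuousLinearMap.smul_apply, smul_eq_mul]
    ring
  rw [Finset.sum_congr rfl fun i _ => key i]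
  rw [Finset.sum_add_distrib, Finset.sum_add_distrib, ← Finset.mul_sum, ← Finset.mul_sum,
    ← Finset.mul_sum]
end Aux


/-- (Integration-by-parts identity for the second variation.) -/
theorem second_variation_identity
    (n : ℕ) (hn : 1 ≤ n)
    (Ω : Set (EuclideanSpace ℝ (Fin n))) (hΩ : IsSmoothBoundedDomain Ω)
    (V : EuclideanSpace ℝ (Fin n) → ℝ)
    (hV : ∃ U, IsOpen U ∧ closure Ω ⊆ U ∧ ContinuousOn V U)
    (c : EuclideanSpace ℝ (Fin n) → ℝ)
    (hc : ∃ U, IsOpen U ∧ closure Ω ⊆ U ∧ ContDiffOn ℝ (⊤ : ℕ∞) c U)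
    (η : EuclideanSpace ℝ (Fin n) → ℝ)
    (hη : ∃ K : NNReal, LipschitzWith K η)
    (hη0 : ∀ x ∈ frontier Ω, η x = 0) :
    (∫ x in Ω, (‖gradient (fun y => c y * η y) x‖ ^ 2 - V x * (c x * η x) ^ 2))
      = ∫ x in Ω, (c x ^ 2 * ‖gradient η x‖ ^ 2 -
          (lapl c x + V x * c x) * c x * η x ^ 2) := by
  classical
  obtain ⟨hΩo, hΩb, hΩne, -⟩ := hΩ
  obtain ⟨U, hUo, hUsub, hcU⟩ := hc
  obtain ⟨UV, hUVo, hUVsub, hVc⟩ := hV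
  obtain ⟨K, hηlip⟩ := hη
  have hKc : IsCompact (closure Ω) := hΩb.isCompact_closure
  have hmeasΩ : MeasurableSet Ω := hΩo.measurableSet
  have hμΩ : volume Ω ≠ ⊤ := hΩb.measure_lt_top.ne
  -- nontrivial ambient space
  have hnontriv : Nontrivial (EuclideanSpace ℝ (Fin n)) := by
    apply Module.nontrivial_of_finrank_pos (R := ℝ)
    rw [finrank_euclideanSpace_fin]
    omega
  have hΩneuniv : Ω ≠ univ := by
    intro h
    exact NormedSpace.unbounded_univ ℝ _ (h ▸ hΩb)
  -- smooth compactly supported modification of c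
  obtain ⟨χ, W, hχsm, hχcs, hχsupp, hWo, hWK, hχ1⟩ := exists_smooth_cutoff hKc hUo hUsub
  set ct : EuclideanSpace ℝ (Fin n) → ℝ := fun x => χ x * c x with hct
  have hagree : ∀ x ∈ W, ct x = c x := fun x hx => by rw [hct]; simp [hχ1 x hx]
  have hctsm : ContDiff ℝ (⊤:ℕ∞) ct := by
    rw [contDiff_iff_contDiffAt]
    intro x
    by_cases hx : x ∈ U
    · exact hχsm.contDiffAt.mul ((hcU.contDiffAt (hUo.mem_nhds hx)).of_le (by simp))
    · have hx' : x ∉ tsupport χ := fun h => hx (hχsupp h)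
      have hev : ct =ᶠ[𝓝 x] (fun _ => (0:ℝ)) := by
        filter_upwards [(isClosed_tsupport χ).isOpen_compl.mem_nhds hx'] with y hy
        simp [hct, image_eq_zero_of_notMem_tsupport hy]
      exact (contDiffAt_const (c := (0:ℝ))).congr_of_eventuallyEq hev
  have hctcs : HasCompactSupport ct := hχcs.mul_right
  have hctd : Differentiable ℝ ct := hctsm.differentiable (by simp)
  -- the modified eta
  set θ : EuclideanSpace ℝ (Fin n) → ℝ := Ω.indicator η with hθ
  have hθlip : LipschitzWith K θ := lipschitz_indicator_of_vanish hΩneuniv hηlip hη0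
  have hθcs : HasCompactSupport θ :=
    HasCompactSupport.of_support_subset_isCompact hKc
      (subset_trans Set.support_indicator_subset subset_closure)
  have hθΩ : ∀ x ∈ Ω, θ x = η x := fun x hx => indicator_of_mem hx η
  have hθ0 : ∀ x ∉ Ω, θ x = 0 := fun x hx => indicator_of_notMem hx η
  -- bounded Lipschitz package
  have hBLct : BL ct :=
    BL.of_continuous_hasCompactSupport hctsm.continuous (lipschitz_of_smooth_cs hctsm hctcs) hctcs
  have hBLθ : BL θ := BL.of_continuous_hasCompactSupport hθlip.continuous ⟨K, hθlip⟩ hθcs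
  -- partial derivatives of ct
  set D : Fin n → EuclideanSpace ℝ (Fin n) → ℝ :=
    fun i x => fderiv ℝ ct x (EuclideanSpace.single i (1:ℝ)) with hD
  have hDsm : ∀ i, ContDiff ℝ (⊤:ℕ∞) (D i) := by
    intro i
    have h1 : ContDiff ℝ (⊤:ℕ∞) (fderiv ℝ ct) :=
      hctsm.fderiv_right (m := (⊤:ℕ∞)) (by exact_mod_cast le_top)
    exact (ContinuousLinearMap.apply ℝ ℝ (EuclideanSpace.single i (1:ℝ))).contDiff.comp h1
  have hDcs : ∀ i, HasCompactSupport (D i) := fun i =>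
    hctcs.fderiv_apply ℝ (EuclideanSpace.single i (1:ℝ))
  have hBLD : ∀ i, BL (D i) := fun i =>
    BL.of_continuous_hasCompactSupport (hDsm i).continuous
      (lipschitz_of_smooth_cs (hDsm i) (hDcs i)) (hDcs i)
  -- the vector field
  set g : Fin n → EuclideanSpace ℝ (Fin n) → ℝ := fun i x => ct x * θ x ^ 2 * D i x with hg
  have hBLg : ∀ i, BL (g i) := by
    intro i
    have h1 : BL (fun x => ct x * (θ x * θ x) * D i x) :=
      (hBLct.mul (hBLθ.mul hBLθ)).mul (hBLD i)
    have : g i = fun x => ct x * (θ x * θ x) * D i x := by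
      funext x; rw [hg]; ring
    rw [this]
    exact h1
  have hgcs : ∀ i, HasCompactSupport (g i) := by
    intro i
    apply HasCompactSupport.of_support_subset_isCompact hθcs
    intro x hx
    apply subset_closure
    simp only [Function.mem_support] at hx ⊢
    intro h0
    apply hx
    show ct x * θ x ^ 2 * D i x = 0
    rw [h0]
    ring
  -- g i vanishes on Ωᶜ and its derivative vanishes there too
  have hgzeroΩc : ∀ i, ∀ x ∉ Ω, g i x = 0 := by
    intro i x hx
    show ct x * θ x ^ 2 * D i x = 0
    rw [hθ0 x hx]
    ring
  have hfderivg_zero : ∀ i, ∀ x ∉ Ω, fderiv ℝ (g i) x = 0 := by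
    intro i x hx
    by_cases hxc : x ∈ closure Ω
    · -- frontier point : quadratic vanishing
      obtain ⟨Kct, Mct, hct1, hct2⟩ := hBLct
      obtain ⟨KD, MD, hD1, hD2⟩ := hBLD i
      have hb : ∀ y, |g i y| ≤ ((Mct:ℝ) * MD * (K:ℝ)^2) * ‖y - x‖ ^ 2 := by
        intro y
        have hθy : |θ y| ≤ (K:ℝ) * ‖y - x‖ := by
          have h := hθlip.dist_le_mul y x
          rw [Real.dist_eq, hθ0 x hx, sub_zero, dist_eq_norm] at h
          exact h
        have habs : |g i y| = |ct y| * θ y ^ 2 * |D i y| := by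
          show |ct y * θ y ^ 2 * D i y| = _
          rw [abs_mul, abs_mul, abs_pow, sq_abs]
        have hsq : θ y ^ 2 ≤ ((K:ℝ) * ‖y - x‖) ^ 2 := by
          rw [← sq_abs]
          exact pow_le_pow_left₀ (abs_nonneg _) hθy 2
        calc |g i y| = |ct y| * θ y ^ 2 * |D i y| := habs
          _ ≤ (Mct:ℝ) * ((K:ℝ) * ‖y - x‖) ^ 2 * (MD:ℝ) := by
              gcongr
              · exact hct2 y
              · exact hD2 y
          _ = ((Mct:ℝ) * MD * (K:ℝ)^2) * ‖y - x‖ ^ 2 := by ring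
      exact (hasFDerivAt_zero_of_sq_bound hb).fderiv
    · have hev : g i =ᶠ[𝓝 x] (fun _ => (0:ℝ)) := by
        filter_upwards [isOpen_compl_iff.2 isClosed_closure |>.mem_nhds hxc] with y hy
        exact hgzeroΩc i y (fun hyΩ => hy (subset_closure hyΩ))
      rw [hev.fderiv_eq]
      simp
  -- divergence integrals vanish
  have hdiv : ∀ i : Fin n, ∫ x in Ω, fderiv ℝ (g i) x (EuclideanSpace.single i (1:ℝ)) = 0 := by
    intro i
    rw [setIntegral_eq_integral_of_forall_compl_eq_zero
        (fun x hx => by rw [hfderivg_zero i x hx]; simp)]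
    obtain ⟨Kg, Mg, hKg, -⟩ := hBLg i
    exact integral_fderiv_apply_eq_zero hKg (hgcs i) _
  -- transfer facts
  have hWnhds : ∀ x ∈ Ω, W ∈ 𝓝 x := fun x hx => hWo.mem_nhds (hWK (subset_closure hx))
  have hfdeq : ∀ x ∈ W, fderiv ℝ ct x = fderiv ℝ c x := fun x hx =>
    Filter.EventuallyEq.fderiv_eq (eventually_of_mem (hWo.mem_nhds hx) hagree)
  have hlapleq : ∀ x ∈ Ω, lapl c x = lapl ct x := by
    intro x hx
    unfold lapl
    refine Finset.sum_congr rfl fun i _ => ?_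
    have hev : (fun y => fderiv ℝ c y (EuclideanSpace.single i (1:ℝ)))
        =ᶠ[𝓝 x] (fun y => fderiv ℝ ct y (EuclideanSpace.single i (1:ℝ))) := by
      filter_upwards [hWnhds x hx] with y hy
      rw [hfdeq y hy]
    rw [hev.fderiv_eq]
  -- a.e. pointwise identity on Ω
  have hkey : ∀ᵐ x ∂(volume.restrict Ω),
      (‖gradient (fun y => c y * η y) x‖ ^ 2 - V x * (c x * η x) ^ 2)
        - (c x ^ 2 * ‖gradient η x‖ ^ 2 - (lapl c x + V x * c x) * c x * η x ^ 2)
      = ∑ i : Fin n, fderiv ℝ (g i) x (EuclideanSpace.single i (1:ℝ)) := by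
    have hrad : ∀ᵐ x ∂(volume.restrict Ω), DifferentiableAt ℝ η x :=
      ae_restrict_of_ae hηlip.ae_differentiableAt
    filter_upwards [hrad, self_mem_ae_restrict hmeasΩ] with x hηd hxΩ
    have hxW : x ∈ W := hWK (subset_closure hxΩ)
    have hgradcη : gradient (fun y => c y * η y) x = gradient (fun y => ct y * η y) x := by
      unfold gradient
      congr 1
      apply Filter.EventuallyEq.fderiv_eq
      filter_upwards [hWnhds x hxΩ] with y hy
      rw [hagree y hy]
    have hgeq : ∀ i : Fin n, fderiv ℝ (g i) x
        = fderiv ℝ (fun y => ct y * η y ^ 2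
            * fderiv ℝ ct y (EuclideanSpace.single i (1:ℝ))) x := by
      intro i
      apply Filter.EventuallyEq.fderiv_eq
      filter_upwards [hΩo.mem_nhds hxΩ] with y hy
      show ct y * θ y ^ 2 * D i y = _
      rw [hθΩ y hy]
    have hctdx : DifferentiableAt ℝ ct x := hctd x
    have hppr := pointwise_product_rule (c := ct) (η := η) hctdx hηd
    have hpdv := pointwise_divergence (c := ct) (η := η) hctsm hηd
    have hsum : ∑ i : Fin n, fderiv ℝ (g i) x (EuclideanSpace.single i (1:ℝ))
        = ∑ i : Fin n, fderiv ℝ (fun y => ct y * η y ^ 2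
            * fderiv ℝ ct y (EuclideanSpace.single i (1:ℝ))) x (EuclideanSpace.single i (1:ℝ)) :=
      Finset.sum_congr rfl fun i _ => by rw [hgeq i]
    have hcx : c x = ct x := (hagree x hxW).symm
    rw [hgradcη, hcx, hlapleq x hxΩ, hsum, hpdv, hppr]
    unfold lapl
    ring
  -- bounds and measurability / integrability
  obtain ⟨KG, MG, hKG, hMG⟩ : BL (fun x => ct x * θ x) := hBLct.mul hBLθ
  obtain ⟨MV, hMV⟩ := hKc.exists_bound_of_continuousOn (hVc.mono hUVsub)
  have hMV0 : 0 ≤ MV := by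
    obtain ⟨x₀, hx₀⟩ := hΩne
    exact le_trans (norm_nonneg _) (hMV x₀ (subset_closure hx₀))
  obtain ⟨Kct, Mct, hct1, hct2⟩ := hBLct
  obtain ⟨Kθ2, Mθ, hθl2, hθ2⟩ := hBLθ
  choose KD MD hKD hMD using hBLD
  set ML : ℝ := ∑ i : Fin n, (KD i : ℝ) * ‖(EuclideanSpace.single i (1:ℝ) :
      EuclideanSpace ℝ (Fin n))‖ with hML
  have hML0 : 0 ≤ ML := Finset.sum_nonneg fun i _ => by positivity
  have hlaplbd : ∀ x, |lapl ct x| ≤ ML := by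
    intro x
    unfold lapl
    refine le_trans (Finset.abs_sum_le_sum_abs _ _) (Finset.sum_le_sum fun i _ => ?_)
    have h1 : ‖fderiv ℝ (fun y => fderiv ℝ ct y (EuclideanSpace.single i (1:ℝ))) x‖
        ≤ (KD i : ℝ) :=
      norm_fderiv_le_of_lipschitz ℝ (hKD i)
    calc |fderiv ℝ (fun y => fderiv ℝ ct y (EuclideanSpace.single i (1:ℝ))) x
            (EuclideanSpace.single i (1:ℝ))|
        ≤ ‖fderiv ℝ (fun y => fderiv ℝ ct y (EuclideanSpace.single i (1:ℝ))) x‖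
            * ‖(EuclideanSpace.single i (1:ℝ) : EuclideanSpace ℝ (Fin n))‖ :=
          (fderiv ℝ (fun y => fderiv ℝ ct y (EuclideanSpace.single i (1:ℝ))) x).le_opNorm _
      _ ≤ (KD i : ℝ) * ‖(EuclideanSpace.single i (1:ℝ) : EuclideanSpace ℝ (Fin n))‖ := by
          gcongr
  -- norms of gradients on Ω
  have hgradnorm : ∀ f : EuclideanSpace ℝ (Fin n) → ℝ, ∀ x,
      ‖gradient f x‖ = ‖fderiv ℝ f x‖ := by
    intro f x
    unfold gradient
    exact LinearIsometryEquiv.norm_map _ _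
  have hgradη_bd : ∀ x, ‖gradient η x‖ ≤ (K : ℝ) := fun x => by
    rw [hgradnorm]
    exact norm_fderiv_le_of_lipschitz ℝ hηlip
  have hgradcη_bd : ∀ x ∈ Ω, ‖gradient (fun y => c y * η y) x‖ ≤ (KG : ℝ) := by
    intro x hx
    rw [hgradnorm]
    have hev : (fun y => c y * η y) =ᶠ[𝓝 x] (fun y => ct y * θ y) := by
      filter_upwards [inter_mem (hWnhds x hx) (hΩo.mem_nhds hx)] with y hy
      rw [hagree y hy.1, hθΩ y hy.2]
    rw [hev.fderiv_eq]
    exact norm_fderiv_le_of_lipschitz ℝ hKG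
  -- measurability pieces
  have hgradmeas : ∀ f : EuclideanSpace ℝ (Fin n) → ℝ, Measurable fun x => ‖gradient f x‖ :=
    fun f => ((InnerProductSpace.toDual ℝ
      (EuclideanSpace ℝ (Fin n))).symm.continuous.measurable.comp (measurable_fderiv ℝ f)).norm
  have hVam : AEMeasurable V (volume.restrict Ω) :=
    (hVc.mono (subset_trans subset_closure hUVsub)).aemeasurable hmeasΩ
  have hcam : AEMeasurable c (volume.restrict Ω) :=
    (hcU.continuousOn.mono (subset_trans subset_closure hUsub)).aemeasurable hmeasΩ
  have hηam : AEMeasurable η (volume.restrict Ω) := hηlip.continuous.measurable.aemeasurable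
  have hlaplm : Measurable (lapl c) := by
    have : Measurable fun x => ∑ i : Fin n, fderiv ℝ
        (fun y => fderiv ℝ c y (EuclideanSpace.single i (1:ℝ))) x
          (EuclideanSpace.single i (1:ℝ)) :=
      Finset.measurable_sum Finset.univ fun i _ => measurable_fderiv_apply_const ℝ _ _
    exact this
  -- integrability of the two integrands
  have hintA : IntegrableOn (fun x => ‖gradient (fun y => c y * η y) x‖ ^ 2
      - V x * (c x * η x) ^ 2) Ω := by
    refine ⟨?_, ?_⟩
    · apply AEStronglyMeasurable.sub
      · exact (((hgradmeas _).pow_const 2).aemeasurable).aestronglyMeasurable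
      · exact (hVam.mul (((hcam.mul hηam).pow_const 2))).aestronglyMeasurable
    · apply HasFiniteIntegral.restrict_of_bounded
        (C := (KG:ℝ)^2 + MV * (MG:ℝ)^2) hμΩ.lt_top
      filter_upwards [self_mem_ae_restrict hmeasΩ] with x hx
      have h1 : ‖gradient (fun y => c y * η y) x‖ ≤ (KG : ℝ) := hgradcη_bd x hx
      have h2 : |c x * η x| ≤ (MG : ℝ) := by
        rw [← hagree x (hWK (subset_closure hx)), ← hθΩ x hx]
        exact hMG x
      have h3 : ‖V x‖ ≤ MV := hMV x (subset_closure hx)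
      rw [Real.norm_eq_abs] at h3 ⊢
      have e1 : (c x * η x) ^ 2 ≤ (MG:ℝ)^2 := by
        rw [← sq_abs]
        exact pow_le_pow_left₀ (abs_nonneg _) h2 2
      have e2 : ‖gradient (fun y => c y * η y) x‖ ^ 2 ≤ (KG:ℝ)^2 :=
        pow_le_pow_left₀ (norm_nonneg _) h1 2
      have e3 : |V x * (c x * η x) ^ 2| ≤ MV * (MG:ℝ)^2 := by
        rw [abs_mul, abs_of_nonneg (sq_nonneg (c x * η x))]
        exact mul_le_mul h3 e1 (sq_nonneg _) hMV0
      calc |‖gradient (fun y => c y * η y) x‖ ^ 2 - V x * (c x * η x) ^ 2|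
          ≤ |‖gradient (fun y => c y * η y) x‖ ^ 2| + |V x * (c x * η x) ^ 2| := abs_sub _ _
        _ ≤ (KG:ℝ)^2 + MV * (MG:ℝ)^2 := by
            rw [abs_of_nonneg (by positivity : (0:ℝ) ≤ ‖gradient (fun y => c y * η y) x‖ ^ 2)]
            exact add_le_add e2 e3
  have hintB : IntegrableOn (fun x => c x ^ 2 * ‖gradient η x‖ ^ 2
      - (lapl c x + V x * c x) * c x * η x ^ 2) Ω := by
    refine ⟨?_, ?_⟩
    · apply AEStronglyMeasurable.sub
      · exact ((hcam.pow_const 2).mul ((hgradmeas η).pow_const 2).aemeasurable).aestronglyMeasurable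
      · exact ((((hlaplm.aemeasurable.add (hVam.mul hcam)).mul hcam).mul
          (hηam.pow_const 2))).aestronglyMeasurable
    · apply HasFiniteIntegral.restrict_of_bounded
        (C := (Mct:ℝ)^2 * (K:ℝ)^2 + (ML + MV * Mct) * Mct * (Mθ:ℝ)^2) hμΩ.lt_top
      filter_upwards [self_mem_ae_restrict hmeasΩ] with x hx
      have hcx : c x = ct x := (hagree x (hWK (subset_closure hx))).symm
      have hc1 : |c x| ≤ (Mct:ℝ) := by rw [hcx]; exact hct2 x
      have hη1 : |η x| ≤ (Mθ:ℝ) := by rw [← hθΩ x hx]; exact hθ2 x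
      have hl1 : |lapl c x| ≤ ML := by rw [hlapleq x hx]; exact hlaplbd x
      have hgη : ‖gradient η x‖ ≤ (K:ℝ) := hgradη_bd x
      have hV1 : |V x| ≤ MV := by
        have := hMV x (subset_closure hx)
        rwa [Real.norm_eq_abs] at this
      rw [Real.norm_eq_abs]
      have e1 : |c x ^ 2 * ‖gradient η x‖ ^ 2| ≤ (Mct:ℝ)^2 * (K:ℝ)^2 := by
        rw [abs_mul, abs_of_nonneg (sq_nonneg (c x)), abs_of_nonneg (sq_nonneg _)]
        have : c x ^2 ≤ (Mct:ℝ)^2 := by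
          rw [← sq_abs]; exact pow_le_pow_left₀ (abs_nonneg _) hc1 2
        have h2 : ‖gradient η x‖^2 ≤ (K:ℝ)^2 := pow_le_pow_left₀ (norm_nonneg _) hgη 2
        exact mul_le_mul this h2 (sq_nonneg _) (by positivity)
      have e2 : |(lapl c x + V x * c x) * c x * η x ^ 2|
          ≤ (ML + MV * Mct) * Mct * (Mθ:ℝ)^2 := by
        rw [abs_mul, abs_mul, abs_of_nonneg (sq_nonneg (η x))]
        have h4 : |lapl c x + V x * c x| ≤ ML + MV * Mct := by
          refine le_trans (abs_add_le _ _) (add_le_add hl1 ?_)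
          rw [abs_mul]
          exact mul_le_mul hV1 hc1 (abs_nonneg _) hMV0
        have h5 : η x ^2 ≤ (Mθ:ℝ)^2 := by
          rw [← sq_abs]; exact pow_le_pow_left₀ (abs_nonneg _) hη1 2
        have h6 : |lapl c x + V x * c x| * |c x| ≤ (ML + MV * Mct) * Mct :=
          mul_le_mul h4 hc1 (abs_nonneg _) (by positivity)
        exact mul_le_mul h6 h5 (sq_nonneg _) (by positivity)
      calc |c x ^ 2 * ‖gradient η x‖ ^ 2 - (lapl c x + V x * c x) * c x * η x ^ 2|
          ≤ |c x ^ 2 * ‖gradient η x‖ ^ 2| + |(lapl c x + V x * c x) * c x * η x ^ 2| :=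
            abs_sub _ _
        _ ≤ (Mct:ℝ)^2 * (K:ℝ)^2 + (ML + MV * Mct) * Mct * (Mθ:ℝ)^2 := add_le_add e1 e2
  -- integrability of divergence terms
  have hintdiv : ∀ i : Fin n, IntegrableOn
      (fun x => fderiv ℝ (g i) x (EuclideanSpace.single i (1:ℝ))) Ω := by
    intro i
    obtain ⟨Kg, Mg, hKg, -⟩ := hBLg i
    refine ⟨(measurable_fderiv_apply_const ℝ _ _).aestronglyMeasurable, ?_⟩
    apply HasFiniteIntegral.restrict_of_bounded
      (C := (Kg:ℝ) * ‖(EuclideanSpace.single i (1:ℝ) : EuclideanSpace ℝ (Fin n))‖) hμΩ.lt_top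
    filter_upwards with x
    calc ‖fderiv ℝ (g i) x (EuclideanSpace.single i (1:ℝ))‖
        ≤ ‖fderiv ℝ (g i) x‖ * ‖(EuclideanSpace.single i (1:ℝ) :
            EuclideanSpace ℝ (Fin n))‖ := (fderiv ℝ (g i) x).le_opNorm _
      _ ≤ (Kg:ℝ) * ‖(EuclideanSpace.single i (1:ℝ) : EuclideanSpace ℝ (Fin n))‖ := by
          gcongr
          exact norm_fderiv_le_of_lipschitz ℝ hKg
  -- final assembly
  have h1 : (∫ x in Ω, ((‖gradient (fun y => c y * η y) x‖ ^ 2 - V x * (c x * η x) ^ 2)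
      - (c x ^ 2 * ‖gradient η x‖ ^ 2 - (lapl c x + V x * c x) * c x * η x ^ 2)))
      = ∫ x in Ω, ∑ i : Fin n, fderiv ℝ (g i) x (EuclideanSpace.single i (1:ℝ)) :=
    integral_congr_ae hkey
  have h2 : (∫ x in Ω, ∑ i : Fin n, fderiv ℝ (g i) x (EuclideanSpace.single i (1:ℝ)))
      = ∑ i : Fin n, ∫ x in Ω, fderiv ℝ (g i) x (EuclideanSpace.single i (1:ℝ)) :=
    integral_finset_sum Finset.univ fun i _ => hintdiv i
  have h3 : (∑ i : Fin n, ∫ x in Ω, fderiv ℝ (g i) x (EuclideanSpace.single i (1:ℝ))) = 0 :=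
    Finset.sum_eq_zero fun i _ => hdiv i
  have h4 := integral_sub hintA hintB
  rw [h1, h2, h3] at h4
  linarith [h4]
end
end

section
/- (Linearized equation satisfied by the regularized gradient norm.) Let Ω ⊆ ℝⁿ be an open set, f : ℝ → ℝ a C∞ function, and u : ℝⁿ → ℝ a C∞ function satisfying Δu(x) + f(u(x)) = 0 for all x ∈ Ω. Fix ε > 0 and set c(x) := √(‖∇u(x)‖² + ε²). Then c is C∞ on Ω and for every x ∈ Ω: Δc(x) + f'(u(x)) c(x) = f'(u(x)) ε² / c(x) + (1/c(x)) · ( ‖D²u(x)‖_F² − ‖D²u(x)·∇u(x)‖² / c(x)² ), where D²u(x) is the Hessian matrix of u at x, ‖D²u(x)‖_F² = Σ_{i,j} (∂_i∂_j u(x))², and D²u(x)·∇u(x) is the vector with i-th component Σ_j ∂_i∂_j u(x) ∂_j u(x). -/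
open MeasureTheory Filter

noncomputable section

namespace RegAux

variable {n : ℕ}

lemma pd_smooth {F : EuclideanSpace ℝ (Fin n) → ℝ} (hF : ContDiff ℝ (⊤ : ℕ∞) F)
    (v : EuclideanSpace ℝ (Fin n)) : ContDiff ℝ (⊤ : ℕ∞) (fun x => fderiv ℝ F x v) :=
  (hF.fderiv_right (by simp)).clm_apply contDiff_const

lemma fderiv_apply_const {F : EuclideanSpace ℝ (Fin n) → ℝ}
    (hF : ContDiff ℝ (⊤ : ℕ∞) F) (x v w : EuclideanSpace ℝ (Fin n)) :
    fderiv ℝ (fun y => fderiv ℝ F y w) x v = fderiv ℝ (fderiv ℝ F) x v w := by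
  have hd : DifferentiableAt ℝ (fderiv ℝ F) x :=
    ((hF.fderiv_right (m := (⊤ : ℕ∞)) (by simp)).differentiable (by simp)) x
  rw [fderiv_clm_apply hd (differentiableAt_const w)]
  simp

lemma pd_comm {F : EuclideanSpace ℝ (Fin n) → ℝ} (hF : ContDiff ℝ (⊤ : ℕ∞) F)
    (x v w : EuclideanSpace ℝ (Fin n)) :
    fderiv ℝ (fun y => fderiv ℝ F y w) x v = fderiv ℝ (fun y => fderiv ℝ F y v) x w := by
  rw [fderiv_apply_const hF, fderiv_apply_const hF]
  exact (hF.contDiffAt.isSymmSndFDerivAt (by norm_num; change ((2 : ℕ∞) : WithTop ℕ∞) ≤ _; exact WithTop.coe_le_coe.2 le_top)) v w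

lemma grad_apply (u : EuclideanSpace ℝ (Fin n) → ℝ) (x : EuclideanSpace ℝ (Fin n)) (j : Fin n) :
    gradient u x j = fderiv ℝ u x (EuclideanSpace.single j 1) := by
  have h1 : (inner ℝ (gradient u x) (EuclideanSpace.single j (1:ℝ)) : ℝ)
      = fderiv ℝ u x (EuclideanSpace.single j 1) := by
    unfold gradient
    exact InnerProductSpace.toDual_symm_apply
  rw [EuclideanSpace.inner_single_right] at h1
  simpa using h1

lemma norm_grad_sq (u : EuclideanSpace ℝ (Fin n) → ℝ) (x : EuclideanSpace ℝ (Fin n)) :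
    ‖gradient u x‖ ^ 2 = ∑ j, (fderiv ℝ u x (EuclideanSpace.single j 1))
      * (fderiv ℝ u x (EuclideanSpace.single j 1)) := by
  rw [← real_inner_self_eq_norm_sq, PiLp.inner_apply]
  simp [grad_apply, sq]

section Generic

variable {E : Type*} [NormedAddCommGroup E] [NormedSpace ℝ E]
variable {F G : E → ℝ} {x : E}

lemma pd_sum {m : ℕ} {A : Fin m → E → ℝ} (hA : ∀ j, DifferentiableAt ℝ (A j) x) (v : E) :
    fderiv ℝ (fun y => ∑ j, A j y) x v = ∑ j, fderiv ℝ (A j) x v := by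
  rw [fderiv_fun_sum fun j _ => hA j]
  simp

lemma pd_mul (hF : DifferentiableAt ℝ F x) (hG : DifferentiableAt ℝ G x) (v : E) :
    fderiv ℝ (fun y => F y * G y) x v = F x * fderiv ℝ G x v + G x * fderiv ℝ F x v := by
  rw [fderiv_fun_mul hF hG]
  simp

lemma pd_add_const (a : ℝ) (v : E) :
    fderiv ℝ (fun y => F y + a) x v = fderiv ℝ F x v := by
  rw [fderiv_add_const]

lemma pd_inv (hF : DifferentiableAt ℝ F x) (h0 : F x ≠ 0) (v : E) :
    fderiv ℝ (fun y => (F y)⁻¹) x v = -((F x)^2)⁻¹ * fderiv ℝ F x v := by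
  have H : HasFDerivAt (fun y => (F y)⁻¹) ((-(F x ^ 2)⁻¹) • fderiv ℝ F x) x :=
    (hasDerivAt_inv h0).comp_hasFDerivAt x hF.hasFDerivAt
  rw [H.fderiv]
  simp

lemma pd_sqrt (hF : DifferentiableAt ℝ F x) (h0 : F x ≠ 0) (v : E) :
    fderiv ℝ (fun y => Real.sqrt (F y)) x v
      = 1 / (2 * Real.sqrt (F x)) * fderiv ℝ F x v := by
  have H : HasFDerivAt (fun y => Real.sqrt (F y)) ((1 / (2 * Real.sqrt (F x))) • fderiv ℝ F x) x :=
    (Real.hasDerivAt_sqrt h0).comp_hasFDerivAt x hF.hasFDerivAt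
  rw [H.fderiv]
  simp

lemma pd_comp_deriv {f : ℝ → ℝ} (hf : DifferentiableAt ℝ f (F x)) (hF : DifferentiableAt ℝ F x)
    (v : E) :
    fderiv ℝ (fun y => f (F y)) x v = deriv f (F x) * fderiv ℝ F x v := by
  have H : HasFDerivAt (fun y => f (F y)) ((deriv f (F x)) • fderiv ℝ F x) x :=
    hf.hasDerivAt.comp_hasFDerivAt x hF.hasFDerivAt
  rw [H.fderiv]
  simp

end Generic

end RegAux

lemma final_algebra {m : ℕ} (C A eps L : ℝ) (hC : 0 < C)
    (G : Fin m → ℝ) (H T : Fin m → Fin m → ℝ)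
    (hL : L = ∑ i, ((∑ j, H i j * G j) * (-(C^2)⁻¹ * ((∑ j, H i j * G j) * C⁻¹))
          + C⁻¹ * ∑ j, (H i j ^ 2 + G j * T i j)))
    (hT : ∀ j, (∑ i, T i j) = -(A * G j))
    (hGG : C ^ 2 = (∑ j, G j * G j) + eps ^ 2) :
    L + A * C = A * eps ^ 2 / C + (1 / C) * ((∑ i, ∑ j, H i j ^ 2)
      - (∑ i, (∑ j, H i j * G j) ^ 2) / C ^ 2) := by
  have hC' : C ≠ 0 := hC.ne'
  have e1 : L = -((∑ i, (∑ j, H i j * G j) ^ 2) * ((C^2)⁻¹ * C⁻¹))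
      + C⁻¹ * ((∑ i, ∑ j, H i j ^ 2) + ∑ j, G j * (-(A * G j))) := by
    rw [hL, Finset.sum_add_distrib]
    congr 1
    · rw [Finset.sum_congr rfl (fun i _ => show
        (∑ j, H i j * G j) * (-(C^2)⁻¹ * ((∑ j, H i j * G j) * C⁻¹))
          = (∑ j, H i j * G j) ^ 2 * (-((C^2)⁻¹ * C⁻¹)) from by ring),
        ← Finset.sum_mul]
      ring
    · rw [← Finset.mul_sum]
      congr 1
      rw [Finset.sum_congr rfl (fun i _ => Finset.sum_add_distrib), Finset.sum_add_distrib]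
      congr 1
      rw [Finset.sum_comm]
      exact Finset.sum_congr rfl fun j _ => by rw [← Finset.mul_sum, hT j]
  have hGG' : ∑ j, G j * G j = C ^ 2 - eps ^ 2 := by linarith
  have e2 : ∑ j, G j * (-(A * G j)) = -(A * (C ^ 2 - eps ^ 2)) := by
    rw [Finset.sum_congr rfl (fun j _ => show G j * (-(A * G j)) = -A * (G j * G j) from by ring),
      ← Finset.mul_sum, hGG']
    ring
  rw [e1, e2]
  field_simp
  ring


open RegAux in
/-- (Linearized equation satisfied by the regularized
gradient norm `c = √(|∇u|² + ε²)`.) -/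
theorem regularized_gradient_norm_equation
    (n : ℕ) (hn : 1 ≤ n)
    (Ω : Set (EuclideanSpace ℝ (Fin n))) (hΩopen : IsOpen Ω)
    (f : ℝ → ℝ) (hf : ContDiff ℝ (⊤ : ℕ∞) f)
    (u : EuclideanSpace ℝ (Fin n) → ℝ) (hu : ContDiff ℝ (⊤ : ℕ∞) u)
    (heq : ∀ x ∈ Ω, lapl u x + f (u x) = 0)
    (ε : ℝ) (hε : 0 < ε)
    (c : EuclideanSpace ℝ (Fin n) → ℝ)
    (hc : c = fun x => Real.sqrt (‖gradient u x‖ ^ 2 + ε ^ 2)) :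
    ContDiffOn ℝ (⊤ : ℕ∞) c Ω ∧
    ∀ x ∈ Ω,
      lapl c x + deriv f (u x) * c x
        = deriv f (u x) * ε ^ 2 / c x +
          (1 / c x) * ((∑ i, ∑ j, hess u x i j ^ 2) -
            (∑ i, (∑ j, hess u x i j * gradient u x j) ^ 2) / c x ^ 2) := by
  -- smoothness of all partial derivatives
  have hg : ∀ j : Fin n,
      ContDiff ℝ (⊤ : ℕ∞) (fun y => fderiv ℝ u y (EuclideanSpace.single j 1)) :=
    fun j => pd_smooth hu _
  have hh : ∀ i j : Fin n, ContDiff ℝ (⊤ : ℕ∞) (fun y =>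
      fderiv ℝ (fun z => fderiv ℝ u z (EuclideanSpace.single j 1)) y
        (EuclideanSpace.single i 1)) :=
    fun i j => pd_smooth (hg j) _
  have hgd : ∀ (j : Fin n) y,
      DifferentiableAt ℝ (fun z => fderiv ℝ u z (EuclideanSpace.single j 1)) y :=
    fun j y => ((hg j).differentiable (by simp)) y
  have hhd : ∀ (i j : Fin n) y, DifferentiableAt ℝ (fun z =>
      fderiv ℝ (fun w => fderiv ℝ u w (EuclideanSpace.single j 1)) z
        (EuclideanSpace.single i 1)) y :=
    fun i j y => ((hh i j).differentiable (by simp)) y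
  have hS : ContDiff ℝ (⊤ : ℕ∞) (fun y => (∑ j, fderiv ℝ u y (EuclideanSpace.single j 1)
      * fderiv ℝ u y (EuclideanSpace.single j 1)) + ε ^ 2) :=
    (ContDiff.sum fun j _ => (hg j).mul (hg j)).add contDiff_const
  have hSpos : ∀ y, 0 < (∑ j, fderiv ℝ u y (EuclideanSpace.single j 1)
      * fderiv ℝ u y (EuclideanSpace.single j 1)) + ε ^ 2 :=
    fun y => add_pos_of_nonneg_of_pos
      (Finset.sum_nonneg fun j _ => mul_self_nonneg _) (pow_pos hε 2)
  have hceq : c = fun y => Real.sqrt ((∑ j, fderiv ℝ u y (EuclideanSpace.single j 1)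
      * fderiv ℝ u y (EuclideanSpace.single j 1)) + ε ^ 2) := by
    funext y
    simp only [hc]
    rw [norm_grad_sq]
  have hcval : ∀ y, c y = Real.sqrt ((∑ j, fderiv ℝ u y (EuclideanSpace.single j 1)
      * fderiv ℝ u y (EuclideanSpace.single j 1)) + ε ^ 2) := fun y => by
    simp only [hceq]
  have hcpos : ∀ y, 0 < c y := fun y => by
    rw [hcval y]; exact Real.sqrt_pos.2 (hSpos y)
  have hcsq : ∀ y, c y ^ 2 = (∑ j, fderiv ℝ u y (EuclideanSpace.single j 1)
      * fderiv ℝ u y (EuclideanSpace.single j 1)) + ε ^ 2 := fun y => by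
    rw [hcval y]; exact Real.sq_sqrt (hSpos y).le
  have hcsm : ContDiff ℝ (⊤ : ℕ∞) c := by
    rw [hceq]
    exact contDiff_iff_contDiffAt.2 fun y =>
      (Real.contDiffAt_sqrt (hSpos y).ne').comp y hS.contDiffAt
  have hcd : ∀ y, DifferentiableAt ℝ c y := fun y => (hcsm.differentiable (by simp)) y
  refine ⟨hcsm.contDiffOn, ?_⟩
  intro x hx
  -- first derivative of c
  have pdc : ∀ (i : Fin n) y, fderiv ℝ c y (EuclideanSpace.single i 1)
      = (∑ j, fderiv ℝ (fun z => fderiv ℝ u z (EuclideanSpace.single j 1)) y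
            (EuclideanSpace.single i 1)
          * fderiv ℝ u y (EuclideanSpace.single j 1)) * (c y)⁻¹ := by
    intro i y
    conv_lhs => rw [hceq]
    rw [pd_sqrt (hS.differentiable (by simp) y) (hSpos y).ne' _]
    rw [pd_add_const (F := fun z => ∑ j, fderiv ℝ u z (EuclideanSpace.single j 1)
      * fderiv ℝ u z (EuclideanSpace.single j 1))]
    rw [pd_sum (A := fun j z => fderiv ℝ u z (EuclideanSpace.single j 1)
      * fderiv ℝ u z (EuclideanSpace.single j 1)) (fun j => (hgd j y).mul (hgd j y)) _]
    rw [Finset.sum_congr rfl (fun j _ => pd_mul (hgd j y) (hgd j y) (EuclideanSpace.single i 1))]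
    rw [← hcval y]
    have h2 : ∑ j, (fderiv ℝ u y (EuclideanSpace.single j 1)
          * fderiv ℝ (fun z => fderiv ℝ u z (EuclideanSpace.single j 1)) y
            (EuclideanSpace.single i 1)
        + fderiv ℝ u y (EuclideanSpace.single j 1)
          * fderiv ℝ (fun z => fderiv ℝ u z (EuclideanSpace.single j 1)) y
            (EuclideanSpace.single i 1))
        = 2 * ∑ j, fderiv ℝ (fun z => fderiv ℝ u z (EuclideanSpace.single j 1)) y
            (EuclideanSpace.single i 1) * fderiv ℝ u y (EuclideanSpace.single j 1) := by
      rw [Finset.mul_sum]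
      exact Finset.sum_congr rfl fun j _ => by ring
    rw [h2]
    field_simp
  have pdc_fun : ∀ i : Fin n, (fun y => fderiv ℝ c y (EuclideanSpace.single i 1))
      = fun y => (∑ j, fderiv ℝ (fun z => fderiv ℝ u z (EuclideanSpace.single j 1)) y
            (EuclideanSpace.single i 1)
          * fderiv ℝ u y (EuclideanSpace.single j 1)) * (c y)⁻¹ :=
    fun i => funext (pdc i)
  have hv : ∀ i : Fin n, ContDiff ℝ (⊤ : ℕ∞) (fun y =>
      ∑ j, fderiv ℝ (fun z => fderiv ℝ u z (EuclideanSpace.single j 1)) y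
            (EuclideanSpace.single i 1)
          * fderiv ℝ u y (EuclideanSpace.single j 1)) :=
    fun i => ContDiff.sum fun j _ => (hh i j).mul (hg j)
  -- Laplacian of c via quotient structure
  have lc : lapl c x = ∑ i, ((∑ j, fderiv ℝ (fun z => fderiv ℝ u z (EuclideanSpace.single j 1)) x
            (EuclideanSpace.single i 1) * fderiv ℝ u x (EuclideanSpace.single j 1))
          * (-((c x)^2)⁻¹ * fderiv ℝ c x (EuclideanSpace.single i 1))
        + (c x)⁻¹ * fderiv ℝ (fun y =>
            ∑ j, fderiv ℝ (fun z => fderiv ℝ u z (EuclideanSpace.single j 1)) y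
              (EuclideanSpace.single i 1) * fderiv ℝ u y (EuclideanSpace.single j 1)) x
            (EuclideanSpace.single i 1)) := by
    unfold lapl
    refine Finset.sum_congr rfl fun i _ => ?_
    rw [pdc_fun i]
    rw [pd_mul (G := fun y => (c y)⁻¹) ((hv i).differentiable (by simp) x) ((hcd x).inv (hcpos x).ne') _]
    rw [pd_inv (hcd x) (hcpos x).ne' _]
  -- expand the derivative of v i
  have pdv : ∀ i : Fin n, fderiv ℝ (fun y =>
        ∑ j, fderiv ℝ (fun z => fderiv ℝ u z (EuclideanSpace.single j 1)) y
          (EuclideanSpace.single i 1) * fderiv ℝ u y (EuclideanSpace.single j 1)) x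
        (EuclideanSpace.single i 1)
      = ∑ j, (fderiv ℝ (fun z => fderiv ℝ u z (EuclideanSpace.single j 1)) x
            (EuclideanSpace.single i 1) ^ 2
        + fderiv ℝ u x (EuclideanSpace.single j 1)
          * fderiv ℝ (fun y => fderiv ℝ (fun z => fderiv ℝ u z (EuclideanSpace.single j 1)) y
              (EuclideanSpace.single i 1)) x (EuclideanSpace.single i 1)) := by
    intro i
    rw [pd_sum (A := fun j y => fderiv ℝ (fun z => fderiv ℝ u z (EuclideanSpace.single j 1)) y
          (EuclideanSpace.single i 1) * fderiv ℝ u y (EuclideanSpace.single j 1))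
        (fun j => (hhd i j x).mul (hgd j x)) _]
    refine Finset.sum_congr rfl fun j _ => ?_
    rw [pd_mul (hhd i j x) (hgd j x)]
    ring
  -- symmetry of third derivatives
  have Tsym : ∀ i j : Fin n,
      fderiv ℝ (fun y => fderiv ℝ (fun z => fderiv ℝ u z (EuclideanSpace.single j 1)) y
          (EuclideanSpace.single i 1)) x (EuclideanSpace.single i 1)
      = fderiv ℝ (fun y => fderiv ℝ (fun z => fderiv ℝ u z (EuclideanSpace.single i 1)) y
          (EuclideanSpace.single i 1)) x (EuclideanSpace.single j 1) := by
    intro i j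
    have h1 : (fun y => fderiv ℝ (fun z => fderiv ℝ u z (EuclideanSpace.single j 1)) y
          (EuclideanSpace.single i 1))
        = (fun y => fderiv ℝ (fun z => fderiv ℝ u z (EuclideanSpace.single i 1)) y
          (EuclideanSpace.single j 1)) :=
      funext fun y => pd_comm hu y _ _
    rw [h1]
    exact pd_comm (hg i) x _ _
  -- sum of third derivatives is the derivative of the laplacian
  have Tlap : ∀ j : Fin n,
      (∑ i, fderiv ℝ (fun y => fderiv ℝ (fun z => fderiv ℝ u z (EuclideanSpace.single j 1)) y
          (EuclideanSpace.single i 1)) x (EuclideanSpace.single i 1))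
      = fderiv ℝ (fun y => lapl u y) x (EuclideanSpace.single j 1) := by
    intro j
    rw [Finset.sum_congr rfl fun i _ => Tsym i j]
    rw [← pd_sum (A := fun i y => fderiv ℝ (fun z => fderiv ℝ u z (EuclideanSpace.single i 1)) y
        (EuclideanSpace.single i 1)) (fun i => hhd i i x) (EuclideanSpace.single j 1)]
    rfl
  -- smoothness of the Laplacian of u and the differentiated PDE
  have hlapl_sm : ContDiff ℝ (⊤ : ℕ∞) (fun y => lapl u y) := by
    have hrw : (fun y => lapl u y) = fun y => ∑ i, fderiv ℝ (fun z =>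
        fderiv ℝ u z (EuclideanSpace.single i 1)) y (EuclideanSpace.single i 1) := rfl
    rw [hrw]
    exact ContDiff.sum fun i _ => hh i i
  have hfud : DifferentiableAt ℝ (fun y => f (u y)) x :=
    DifferentiableAt.comp x ((hf.differentiable (by simp)) (u x)) ((hu.differentiable (by simp)) x)
  have hzero : fderiv ℝ (fun y => lapl u y + f (u y)) x = 0 := by
    have hev : (fun y => lapl u y + f (u y)) =ᶠ[nhds x] fun _ => (0:ℝ) := by
      filter_upwards [hΩopen.mem_nhds hx] with y hy using heq y hy
    rw [hev.fderiv_eq]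
    exact fderiv_const_apply 0
  have hpde : ∀ j : Fin n, fderiv ℝ (fun y => lapl u y) x (EuclideanSpace.single j 1)
      = -(deriv f (u x) * fderiv ℝ u x (EuclideanSpace.single j 1)) := by
    intro j
    have hadd : fderiv ℝ (fun y => lapl u y + f (u y)) x
        = fderiv ℝ (fun y => lapl u y) x + fderiv ℝ (fun y => f (u y)) x :=
      fderiv_add ((hlapl_sm.differentiable (by simp)) x) hfud
    have h0 : fderiv ℝ (fun y => lapl u y) x (EuclideanSpace.single j 1)
        + fderiv ℝ (fun y => f (u y)) x (EuclideanSpace.single j 1) = 0 := by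
      have h00 := congrArg (fun L : EuclideanSpace ℝ (Fin n) →L[ℝ] ℝ =>
        L (EuclideanSpace.single j 1)) (hadd.symm.trans hzero)
      simpa using h00
    have h1 : fderiv ℝ (fun y => f (u y)) x (EuclideanSpace.single j 1)
        = deriv f (u x) * fderiv ℝ u x (EuclideanSpace.single j 1) :=
      pd_comp_deriv ((hf.differentiable (by simp)) (u x)) ((hu.differentiable (by simp)) x) _
    rw [h1] at h0
    linarith
  -- assemble everything
  have lc2 : lapl c x = ∑ i, ((∑ j, fderiv ℝ (fun z => fderiv ℝ u z (EuclideanSpace.single j 1)) x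
          (EuclideanSpace.single i 1) * fderiv ℝ u x (EuclideanSpace.single j 1))
        * (-((c x)^2)⁻¹ * ((∑ j, fderiv ℝ (fun z => fderiv ℝ u z (EuclideanSpace.single j 1)) x
            (EuclideanSpace.single i 1) * fderiv ℝ u x (EuclideanSpace.single j 1)) * (c x)⁻¹))
      + (c x)⁻¹ * ∑ j, (fderiv ℝ (fun z => fderiv ℝ u z (EuclideanSpace.single j 1)) x
          (EuclideanSpace.single i 1) ^ 2
        + fderiv ℝ u x (EuclideanSpace.single j 1)
          * fderiv ℝ (fun y => fderiv ℝ (fun z => fderiv ℝ u z (EuclideanSpace.single j 1)) y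
              (EuclideanSpace.single i 1)) x (EuclideanSpace.single i 1))) := by
    rw [lc]
    exact Finset.sum_congr rfl fun i _ => by rw [pdc i x, pdv i]
  have hT : ∀ j : Fin n, (∑ i, fderiv ℝ (fun y =>
        fderiv ℝ (fun z => fderiv ℝ u z (EuclideanSpace.single j 1)) y
          (EuclideanSpace.single i 1)) x (EuclideanSpace.single i 1))
      = -(deriv f (u x) * fderiv ℝ u x (EuclideanSpace.single j 1)) :=
    fun j => (Tlap j).trans (hpde j)
  have hgoal := final_algebra (c x) (deriv f (u x)) ε (lapl c x) (hcpos x)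
      (fun j => fderiv ℝ u x (EuclideanSpace.single j 1))
      (fun i j => fderiv ℝ (fun z => fderiv ℝ u z (EuclideanSpace.single j 1)) x
        (EuclideanSpace.single i 1))
      (fun i j => fderiv ℝ (fun y => fderiv ℝ (fun z =>
        fderiv ℝ u z (EuclideanSpace.single j 1)) y (EuclideanSpace.single i 1)) x
        (EuclideanSpace.single i 1))
      lc2 hT (hcsq x)
  simpa only [hess, RegAux.grad_apply] using hgoal
end
end

section
/- (Uniform linear lower bound for solutions with forcing bounded below.) Let Ω ⊆ ℝⁿ (n ≥ 2) be a bounded smooth domain. Then there exists a constant c > 0 depending only on Ω such that: for every c₁ > 0, every continuous function f : ℝ → ℝ with f(s) ≥ c₁ for all s ≥ 0, and every classical solution u of −Δu = f(u) in Ω with u = 0 on ∂Ω and u ≥ 0 in Ω, one has u(x) ≥ c₁ · c · dist(x,∂Ω) for every x ∈ Ω. -/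
open MeasureTheory Filter

noncomputable section

open Set Metric Topology Bornology

theorem secondDirDeriv_nonneg {n : ℕ} {h : EuclideanSpace ℝ (Fin n) → ℝ}
    {U : Set (EuclideanSpace ℝ (Fin n))} (hU : IsOpen U)
    (hh : ContDiffOn ℝ 2 h U) {x₀ : EuclideanSpace ℝ (Fin n)} (hx : x₀ ∈ U)
    (hmin : IsLocalMin h x₀) (e : EuclideanSpace ℝ (Fin n)) :
    0 ≤ fderiv ℝ (fun y => fderiv ℝ h y e) x₀ e := by
  by_contra hD0
  push_neg at hD0
  set F := fun y => fderiv ℝ h y e with hF_def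
  set D := fderiv ℝ F x₀ e with hD_def
  -- the line
  set L : ℝ → EuclideanSpace ℝ (Fin n) := fun t => x₀ + t • e with hL_def
  have hL0 : L 0 = x₀ := by simp [hL_def]
  have hLd : ∀ t : ℝ, HasDerivAt L e t := by
    intro t
    simpa [hL_def] using ((hasDerivAt_id t).smul_const e).const_add x₀
  have hLc : Continuous L := by continuity
  -- smoothness facts
  have hca : ContDiffAt ℝ 2 h x₀ := hh.contDiffAt (hU.mem_nhds hx)
  have hF1 : ContDiffAt ℝ 1 (fderiv ℝ h) x₀ := by
    refine ContDiffAt.fderiv_right hca ?_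
    norm_num
  have hFca : ContDiffAt ℝ 1 F x₀ :=
    (ContinuousLinearMap.apply ℝ ℝ e).contDiff.contDiffAt.comp x₀ hF1
  have hFd : DifferentiableAt ℝ F x₀ := hFca.differentiableAt one_ne_zero
  -- g and G
  set g : ℝ → ℝ := fun t => h (L t) with hg_def
  set G : ℝ → ℝ := fun t => F (L t) with hG_def
  have hgmin : IsLocalMin g 0 := by
    rw [hg_def]
    exact IsLocalMin.comp_continuous (hL0 ▸ hmin) hLc.continuousAt
  -- nbhd where L t ∈ U
  have hLU : ∀ᶠ t in 𝓝 (0:ℝ), L t ∈ U := by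
    have : ContinuousAt L 0 := hLc.continuousAt
    exact this (hL0 ▸ hU.mem_nhds hx)
  have hgd : ∀ t : ℝ, L t ∈ U → HasDerivAt g (G t) t := by
    intro t ht
    have hdiff : DifferentiableAt ℝ h (L t) :=
      (hh.differentiableOn (by norm_num)).differentiableAt (hU.mem_nhds ht)
    exact hdiff.hasFDerivAt.comp_hasDerivAt t (hLd t)
  -- derivative of g at 0 is 0
  have hG0 : G 0 = 0 := by
    have h1 : HasDerivAt g (G 0) 0 := hgd 0 (hL0 ▸ hx)
    have h2 : deriv g 0 = 0 := hgmin.deriv_eq_zero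
    rw [← h1.deriv, h2]
  -- G has derivative D at 0
  have hGD : HasDerivAt G D 0 := by
    have hF' : HasFDerivAt F (fderiv ℝ F x₀) (L 0) := hL0 ▸ hFd.hasFDerivAt
    exact hF'.comp_hasDerivAt 0 (hLd 0)
  -- eventually G t < 0 for t > 0
  have hslope : Tendsto (fun t => G t / t) (𝓝[>] (0:ℝ)) (𝓝 D) := by
    have := hasDerivAt_iff_tendsto_slope.mp hGD
    have h2 := this.mono_left (nhdsWithin_mono 0 (fun t ht => by simp at ht ⊢; exact ne_of_gt ht : Ioi (0:ℝ) ⊆ {0}ᶜ))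
    refine h2.congr ?_
    intro t
    simp [slope, hG0, div_eq_inv_mul]
  have hGneg : ∀ᶠ t in 𝓝[>] (0:ℝ), G t < 0 := by
    have hev : ∀ᶠ t in 𝓝[>] (0:ℝ), G t / t < D / 2 := by
      have : Iio (D/2) ∈ 𝓝 D := Iio_mem_nhds (by linarith)
      exact hslope this
    filter_upwards [hev, self_mem_nhdsWithin] with t h1 h2
    rw [mem_Ioi] at h2
    have : G t / t < 0 := lt_trans h1 (by linarith)
    exact (div_neg_iff.mp this).resolve_left (fun ⟨_, h⟩ => absurd h2 (not_lt.mpr h.le)) |>.1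
  -- combine facts on a right-neighborhood of 0
  have hall : ∀ᶠ t in 𝓝[>] (0:ℝ), G t < 0 ∧ L t ∈ U ∧ g 0 ≤ g t := by
    filter_upwards [hGneg, (hLU.filter_mono nhdsWithin_le_nhds),
      (hgmin.filter_mono nhdsWithin_le_nhds)] with t h1 h2 h3
    exact ⟨h1, h2, h3⟩
  obtain ⟨u, hu, hsub⟩ := mem_nhdsGT_iff_exists_Ioo_subset.mp hall
  rw [mem_Ioi] at hu
  set t₀ := u / 2 with ht₀_def
  have ht₀ : t₀ ∈ Ioo (0:ℝ) u := ⟨by positivity, by linarith⟩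
  have hmem : ∀ t ∈ Ioo (0:ℝ) u, G t < 0 ∧ L t ∈ U ∧ g 0 ≤ g t := fun t ht => hsub ht
  have hanti : StrictAntiOn g (Icc 0 t₀) := by
    refine strictAntiOn_of_deriv_neg (convex_Icc 0 t₀) ?_ ?_
    · intro t ht
      rcases eq_or_lt_of_le ht.1 with h0 | h0
      · rw [← h0]
        exact (hgd 0 (hL0 ▸ hx)).continuousAt.continuousWithinAt
      · have : t ∈ Ioo (0:ℝ) u := ⟨h0, lt_of_le_of_lt ht.2 (by linarith)⟩
        exact (hgd t (hmem t this).2.1).continuousAt.continuousWithinAt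
    · intro t ht
      rw [interior_Icc] at ht
      have htu : t ∈ Ioo (0:ℝ) u := ⟨ht.1, lt_trans ht.2 (by linarith)⟩
      rw [(hgd t (hmem t htu).2.1).deriv]
      exact (hmem t htu).1
  have h1 : g t₀ < g 0 := hanti (left_mem_Icc.mpr (by linarith)) ⟨ht₀.1.le, le_refl _⟩ ht₀.1
  have h2 : g 0 ≤ g t₀ := (hmem t₀ ht₀).2.2
  linarith

theorem lapl_nonneg_of_isLocalMin {n : ℕ} {h : EuclideanSpace ℝ (Fin n) → ℝ}
    {U : Set (EuclideanSpace ℝ (Fin n))} (hU : IsOpen U)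
    (hh : ContDiffOn ℝ 2 h U) {x₀ : EuclideanSpace ℝ (Fin n)} (hx : x₀ ∈ U)
    (hmin : IsLocalMin h x₀) : 0 ≤ lapl h x₀ :=
  Finset.sum_nonneg fun i _ => secondDirDeriv_nonneg hU hh hx hmin _

theorem min_principle {n : ℕ} {Ω U : Set (EuclideanSpace ℝ (Fin n))} (hΩo : IsOpen Ω)
    (hΩb : Bornology.IsBounded Ω) (hΩne : Ω.Nonempty) (hU : IsOpen U)
    (hsub : closure Ω ⊆ U) {h : EuclideanSpace ℝ (Fin n) → ℝ} (hh : ContDiffOn ℝ 2 h U)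
    (hlap : ∀ x ∈ Ω, lapl h x < 0) (hbd : ∀ x ∈ frontier Ω, 0 ≤ h x) :
    ∀ x ∈ Ω, 0 ≤ h x := by
  have hc : IsCompact (closure Ω) := hΩb.isCompact_closure
  have hcont : ContinuousOn h (closure Ω) := (hh.continuousOn).mono hsub
  obtain ⟨x₀, hx₀mem, hx₀min⟩ := hc.exists_isMinOn hΩne.closure hcont
  by_cases hin : x₀ ∈ Ω
  · exfalso
    have hloc : IsLocalMin h x₀ :=
      hx₀min.isLocalMin (Filter.mem_of_superset (hΩo.mem_nhds hin) subset_closure)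
    exact absurd (lapl_nonneg_of_isLocalMin hU hh (hsub hx₀mem) hloc)
      (not_le.mpr (hlap x₀ hin))
  · have hfr : x₀ ∈ frontier Ω := by
      rw [frontier, hΩo.interior_eq]
      exact ⟨hx₀mem, hin⟩
    intro x hx
    exact le_trans (hbd x₀ hfr) (hx₀min (subset_closure hx))

theorem diffAt_dd {n : ℕ} {f : EuclideanSpace ℝ (Fin n) → ℝ} {x e : EuclideanSpace ℝ (Fin n)}
    (hf : ContDiffAt ℝ 2 f x) : DifferentiableAt ℝ (fun y => fderiv ℝ f y e) x :=
  ((ContinuousLinearMap.apply ℝ ℝ e).contDiff.contDiffAt.comp x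
    (hf.fderiv_right (m := 1) (by norm_num))).differentiableAt one_ne_zero

theorem lapl_add_mul {n : ℕ} {u ρ : EuclideanSpace ℝ (Fin n) → ℝ}
    {U : Set (EuclideanSpace ℝ (Fin n))} (hU : IsOpen U) (hu : ContDiffOn ℝ 2 u U)
    (hρ : ContDiff ℝ (⊤ : ℕ∞) ρ) (s : ℝ) {x : EuclideanSpace ℝ (Fin n)} (hx : x ∈ U) :
    lapl (fun y => u y + s * ρ y) x = lapl u x + s * lapl ρ x := by
  have hρ2 : ContDiff ℝ 2 ρ := hρ.of_le (WithTop.coe_le_coe.mpr le_top)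
  rw [lapl, lapl, lapl, Finset.mul_sum, ← Finset.sum_add_distrib]
  refine Finset.sum_congr rfl fun i _ => ?_
  set e := EuclideanSpace.single i (1:ℝ)
  have hev : (fun y => fderiv ℝ (fun z => u z + s * ρ z) y e)
      =ᶠ[nhds x] (fun y => fderiv ℝ u y e + s * fderiv ℝ ρ y e) := by
    filter_upwards [hU.mem_nhds hx] with y hy
    have hud : DifferentiableAt ℝ u y :=
      ((hu.contDiffAt (hU.mem_nhds hy)).of_le (m := 1) (by norm_num)).differentiableAt one_ne_zero
    have hρd : DifferentiableAt ℝ ρ y := (hρ.differentiable (by simp)) y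
    rw [fderiv_fun_add hud (hρd.const_mul s), fderiv_const_mul hρd s]
    simp
  rw [hev.fderiv_eq]
  have h1 : DifferentiableAt ℝ (fun y => fderiv ℝ u y e) x :=
    diffAt_dd (hu.contDiffAt (hU.mem_nhds hx))
  have h2 : DifferentiableAt ℝ (fun y => fderiv ℝ ρ y e) x :=
    diffAt_dd hρ2.contDiffAt
  rw [fderiv_fun_add h1 (h2.const_mul s), fderiv_const_mul h2 s]
  simp

theorem continuous_lapl {n : ℕ} {ρ : EuclideanSpace ℝ (Fin n) → ℝ}
    (hρ : ContDiff ℝ (⊤ : ℕ∞) ρ) : Continuous (lapl ρ) := by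
  refine continuous_finset_sum _ fun i _ => ?_
  set e := EuclideanSpace.single i (1:ℝ)
  have h1 : ContDiff ℝ (⊤ : ℕ∞) (fun y => fderiv ℝ ρ y e) :=
    (ContinuousLinearMap.apply ℝ ℝ e).contDiff.comp (hρ.fderiv_right (by simp))
  have h2 : Continuous (fderiv ℝ (fun y => fderiv ℝ ρ y e)) :=
    (h1.fderiv_right (m := 2) (WithTop.coe_le_coe.mpr le_top)).continuous
  exact h2.clm_apply continuous_const

theorem line_step {n : ℕ} {Ω : Set (EuclideanSpace ℝ (Fin n))}
    {ρ : EuclideanSpace ℝ (Fin n) → ℝ}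
    (hρ : ContDiff ℝ (⊤ : ℕ∞) ρ) (hΩρ : Ω = {x | ρ x < 0}) (hfr : frontier Ω = {x | ρ x = 0})
    {R δ L T : ℝ} (hδ : 0 < δ) (hL : 0 < L) (hT : 0 < T)
    (hT1 : T ≤ 1) (hTδ : T ≤ δ / (2 * L))
    (hB : ∀ y z : EuclideanSpace ℝ (Fin n), y ∈ closedBall (0:EuclideanSpace ℝ (Fin n)) (R+1) →
      z ∈ closedBall (0:EuclideanSpace ℝ (Fin n)) (R+1) →
      ‖fderiv ℝ ρ z - fderiv ℝ ρ y‖ ≤ L * ‖z - y‖)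
    {x : EuclideanSpace ℝ (Fin n)} (hx : x ∈ Ω) (hxR : ‖x‖ ≤ R)
    (hgx : δ ≤ ‖gradient ρ x‖) (hρx : -ρ x ≤ δ * T / 4) :
    Metric.infDist x (frontier Ω) ≤ (2/δ) * (-ρ x) := by
  have hρx0 : ρ x < 0 := by rw [hΩρ] at hx; exact hx
  have hgnorm : (0:ℝ) < ‖gradient ρ x‖ := lt_of_lt_of_le hδ hgx
  set v : EuclideanSpace ℝ (Fin n) := ‖gradient ρ x‖⁻¹ • gradient ρ x with hv_def
  have hv : ‖v‖ = 1 := by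
    rw [hv_def, norm_smul, norm_inv, norm_norm]
    field_simp
  set t₁ : ℝ := (2/δ) * (-ρ x) with ht₁_def
  have hρxpos : 0 ≤ -ρ x := by linarith
  have ht₁0 : 0 ≤ t₁ := mul_nonneg (by positivity) hρxpos
  have ht₁T : t₁ ≤ T / 2 := by
    have h2 : (2/δ) * (-ρ x) ≤ (2/δ) * (δ*T/4) :=
      mul_le_mul_of_nonneg_left hρx (by positivity)
    have h3 : (2/δ) * (δ*T/4) = T/2 := by field_simp; ring
    rw [ht₁_def]
    linarith
  set g : ℝ → ℝ := fun t => ρ (x + t • v) with hg_def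
  have hgd : ∀ t : ℝ, HasDerivAt g (fderiv ℝ ρ (x + t • v) v) t := by
    intro t
    have hline : HasDerivAt (fun t : ℝ => x + t • v) v t := by
      simpa using ((hasDerivAt_id t).smul_const v).const_add x
    exact ((hρ.differentiable (by simp)) (x + t • v)).hasFDerivAt.comp_hasDerivAt t hline
  have hfx : fderiv ℝ ρ x v = ‖gradient ρ x‖ := by
    have h1 : fderiv ℝ ρ x v = inner ℝ (gradient ρ x) v :=
      (InnerProductSpace.toDual_symm_apply (𝕜 := ℝ)).symm
    rw [h1, hv_def, real_inner_smul_right, real_inner_self_eq_norm_mul_norm]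
    field_simp
  have hderiv_lb : ∀ t ∈ Icc (0:ℝ) t₁, δ/2 ≤ fderiv ℝ ρ (x + t • v) v := by
    intro t ht
    have htT : t ≤ T := le_trans ht.2 (le_trans ht₁T (by linarith))
    have hxB : x ∈ closedBall (0:EuclideanSpace ℝ (Fin n)) (R+1) := by
      rw [mem_closedBall, dist_zero_right]; linarith
    have hyB : x + t • v ∈ closedBall (0:EuclideanSpace ℝ (Fin n)) (R+1) := by
      rw [mem_closedBall, dist_zero_right]
      calc ‖x + t • v‖ ≤ ‖x‖ + ‖t • v‖ := norm_add_le _ _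
        _ ≤ R + 1 := by
            rw [norm_smul, hv, mul_one, Real.norm_eq_abs, abs_of_nonneg ht.1]
            have : t ≤ 1 := le_trans htT hT1
            linarith
    have hdiff : ‖fderiv ℝ ρ (x + t • v) - fderiv ℝ ρ x‖ ≤ L * t := by
      have := hB x (x + t • v) hxB hyB
      simpa [norm_smul, hv, Real.norm_eq_abs, abs_of_nonneg ht.1] using this
    have happ : |fderiv ℝ ρ (x + t • v) v - fderiv ℝ ρ x v| ≤ L * t := by
      have h2 : fderiv ℝ ρ (x + t • v) v - fderiv ℝ ρ x v
          = (fderiv ℝ ρ (x + t • v) - fderiv ℝ ρ x) v := by simp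
      rw [h2, ← Real.norm_eq_abs]
      calc ‖(fderiv ℝ ρ (x + t • v) - fderiv ℝ ρ x) v‖
          ≤ ‖fderiv ℝ ρ (x + t • v) - fderiv ℝ ρ x‖ * ‖v‖ :=
            ContinuousLinearMap.le_opNorm _ _
        _ ≤ L * t := by rw [hv, mul_one]; exact hdiff
    have hLt : L * t ≤ δ / 2 := by
      have h3 : L * T ≤ δ / 2 := by
        rw [le_div_iff₀ (by positivity : (0:ℝ) < 2*L)] at hTδ
        nlinarith
      nlinarith [(mul_le_mul_of_nonneg_left htT hL.le)]
    have := abs_le.mp happ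
    rw [hfx] at this
    linarith [this.1]
  -- mean value: g t₁ - g 0 ≥ (δ/2) * t₁
  have hg_cont : ContinuousOn g (Icc 0 t₁) := fun t _ => (hgd t).continuousAt.continuousWithinAt
  have hg_diff : DifferentiableOn ℝ g (interior (Icc 0 t₁)) :=
    fun t _ => (hgd t).differentiableAt.differentiableWithinAt
  have hmvt := (convex_Icc (0:ℝ) t₁).mul_sub_le_image_sub_of_le_deriv hg_cont hg_diff
    (fun t ht => by
      rw [interior_Icc] at ht
      rw [(hgd t).deriv]
      exact hderiv_lb t (Ioo_subset_Icc_self ht))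
    0 (left_mem_Icc.mpr ht₁0) t₁ (right_mem_Icc.mpr ht₁0) ht₁0
  have hg0 : g 0 = ρ x := by simp [hg_def]
  have hgt₁ : 0 ≤ g t₁ := by
    have hh : δ/2 * t₁ = -ρ x := by
      rw [ht₁_def]
      field_simp
    rw [hg0] at hmvt
    rw [sub_zero] at hmvt
    linarith [hmvt, hh.ge, hh.le]
  -- IVT
  have hivt := intermediate_value_Icc ht₁0 hg_cont
  have h0mem : (0:ℝ) ∈ Icc (g 0) (g t₁) := by
    rw [hg0]; exact ⟨hρx0.le, hgt₁⟩
  obtain ⟨ts, hts, hgts⟩ := hivt h0mem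
  have hfront : x + ts • v ∈ frontier Ω := by
    rw [hfr]; exact hgts
  calc Metric.infDist x (frontier Ω) ≤ dist x (x + ts • v) :=
        Metric.infDist_le_dist_of_mem hfront
    _ = ts := by
        rw [dist_eq_norm]
        simp [norm_smul, hv, Real.norm_eq_abs, abs_of_nonneg hts.1]
    _ ≤ t₁ := hts.2

theorem dist_le_C_neg_rho {n : ℕ} (hn : 0 < n) {Ω : Set (EuclideanSpace ℝ (Fin n))}
    (hΩo : IsOpen Ω) (hΩb : IsBounded Ω) (hΩne : Ω.Nonempty)
    {ρ : EuclideanSpace ℝ (Fin n) → ℝ}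
    (hρ : ContDiff ℝ (⊤ : ℕ∞) ρ) (hΩρ : Ω = {x | ρ x < 0}) (hfr : frontier Ω = {x | ρ x = 0})
    (hgrad : ∀ x ∈ frontier Ω, gradient ρ x ≠ 0) :
    ∃ C : ℝ, 0 < C ∧ ∀ x ∈ Ω, Metric.infDist x (frontier Ω) ≤ C * (-ρ x) := by
  have hcc : IsCompact (closure Ω) := hΩb.isCompact_closure
  have hfc : IsCompact (frontier Ω) :=
    hcc.of_isClosed_subset isClosed_frontier frontier_subset_closure
  -- frontier is nonempty
  have hfne : (frontier Ω).Nonempty := by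
    rw [nonempty_frontier_iff]
    refine ⟨hΩne, fun huniv => ?_⟩
    obtain ⟨r, hr⟩ := (huniv ▸ hΩb).subset_closedBall 0
    have h1 := hr (mem_univ (EuclideanSpace.single (⟨0, hn⟩ : Fin n) (|r|+1)))
    rw [mem_closedBall, dist_zero_right, EuclideanSpace.norm_single] at h1
    have := abs_nonneg r
    rw [Real.norm_eq_abs, abs_of_nonneg (by linarith)] at h1
    have := le_abs_self r
    linarith
  -- continuity of the gradient
  have hfderivc : Continuous (fderiv ℝ ρ) := (hρ.fderiv_right (m := 2) (WithTop.coe_le_coe.mpr le_top)).continuous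
  have hgc : Continuous fun x => gradient ρ x := by
    exact (LinearIsometryEquiv.continuous _).comp hfderivc
  -- δ : lower bound for ‖∇ρ‖ near the boundary
  obtain ⟨z₀, hz₀, hzmin⟩ := hfc.exists_isMinOn hfne hgc.norm.continuousOn
  set δ : ℝ := ‖gradient ρ z₀‖ / 2 with hδ_def
  have hδ : 0 < δ := by
    have := hgrad z₀ hz₀
    have : 0 < ‖gradient ρ z₀‖ := norm_pos_iff.mpr this
    positivity
  have hVopen : IsOpen {x | δ < ‖gradient ρ x‖} := isOpen_lt continuous_const hgc.norm
  have hVsub : frontier Ω ⊆ {x | δ < ‖gradient ρ x‖} := by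
    intro z hz
    have h1 : ‖gradient ρ z₀‖ ≤ ‖gradient ρ z‖ := hzmin hz
    simp only [mem_setOf_eq, hδ_def]
    have : 0 < ‖gradient ρ z₀‖ := norm_pos_iff.mpr (hgrad z₀ hz₀)
    linarith
  obtain ⟨r₀, hr₀, hthick⟩ := hfc.exists_thickening_subset_open hVopen hVsub
  -- radius R
  obtain ⟨R', hR'⟩ := hΩb.subset_closedBall 0
  set R : ℝ := max R' 0 with hR_def
  have hR0 : 0 ≤ R := le_max_right _ _
  have hclosR : closure Ω ⊆ closedBall (0:EuclideanSpace ℝ (Fin n)) R :=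
    closure_minimal (hR'.trans (closedBall_subset_closedBall (le_max_left _ _)))
      Metric.isClosed_closedBall
  -- Lipschitz constant for fderiv ρ on the big ball
  have hcont2 : Continuous (fderiv ℝ (fderiv ℝ ρ)) :=
    ((hρ.fderiv_right (m := (⊤ : ℕ∞)) (by simp)).fderiv_right (m := 2) (WithTop.coe_le_coe.mpr le_top)).continuous
  obtain ⟨L0, hL0⟩ := (isCompact_closedBall (0:EuclideanSpace ℝ (Fin n)) (R+1)).exists_bound_of_continuousOn
    (f := fderiv ℝ (fderiv ℝ ρ)) hcont2.continuousOn
  set L : ℝ := max L0 1 with hL_def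
  have hL : 0 < L := lt_of_lt_of_le one_pos (le_max_right _ _)
  have hB : ∀ y z : EuclideanSpace ℝ (Fin n), y ∈ closedBall (0:EuclideanSpace ℝ (Fin n)) (R+1) →
      z ∈ closedBall (0:EuclideanSpace ℝ (Fin n)) (R+1) →
      ‖fderiv ℝ ρ z - fderiv ℝ ρ y‖ ≤ L * ‖z - y‖ := by
    intro y z hy hz
    exact (convex_closedBall _ _).norm_image_sub_le_of_norm_fderiv_le
      (fun w _ => ((hρ.fderiv_right (m := 1) (WithTop.coe_le_coe.mpr le_top)).differentiable one_ne_zero) w)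
      (fun w hw => le_trans (hL0 w hw) (le_max_left _ _)) hy hz
  -- time horizon T
  set T : ℝ := min (δ / (2*L)) 1 with hT_def
  have hT : 0 < T := lt_min (by positivity) one_pos
  have hT1 : T ≤ 1 := min_le_right _ _
  have hTδ : T ≤ δ / (2*L) := min_le_left _ _
  -- interior compact set K'
  set K' : Set (EuclideanSpace ℝ (Fin n)) :=
    {y | y ∈ closure Ω ∧ r₀ ≤ Metric.infDist y (frontier Ω)} with hK'_def
  have hK'c : IsCompact K' := by
    refine hcc.of_isClosed_subset ?_ (fun y hy => hy.1)
    exact isClosed_closure.inter (isClosed_le continuous_const (continuous_infDist_pt _))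
  have hm : ∃ m : ℝ, 0 < m ∧ ∀ y ∈ K', m ≤ -ρ y := by
    rcases K'.eq_empty_or_nonempty with he | hne
    · exact ⟨1, one_pos, fun y hy => absurd (he ▸ hy) (notMem_empty y)⟩
    · obtain ⟨y₀, hy₀, hymin⟩ := hK'c.exists_isMinOn hne
        ((hρ.continuous).neg.continuousOn)
      have hy₀Ω : y₀ ∈ Ω := by
        have h1 : y₀ ∉ frontier Ω := by
          intro hmem
          have := hy₀.2
          rw [Metric.infDist_zero_of_mem hmem] at this
          linarith
        have h2 := hy₀.1
        by_contra hcon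
        exact h1 (hΩo.frontier_eq ▸ ⟨h2, hcon⟩)
      have hρy₀ : ρ y₀ < 0 := by rw [hΩρ] at hy₀Ω; exact hy₀Ω
      exact ⟨-ρ y₀, by linarith, fun y hy => hymin hy⟩
  obtain ⟨m, hmpos, hmle⟩ := hm
  -- diameter-type bound
  have hDbound : ∀ x ∈ Ω, Metric.infDist x (frontier Ω) ≤ 2*R + 1 := by
    intro x hx
    obtain ⟨z, hz⟩ := hfne
    have h1 : ‖x‖ ≤ R := by
      have := hclosR (subset_closure hx); rwa [mem_closedBall, dist_zero_right] at this
    have h2 : ‖z‖ ≤ R := by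
      have := hclosR (frontier_subset_closure hz); rwa [mem_closedBall, dist_zero_right] at this
    calc Metric.infDist x (frontier Ω) ≤ dist x z := Metric.infDist_le_dist_of_mem hz
      _ ≤ ‖x‖ + ‖z‖ := by rw [dist_eq_norm]; exact norm_sub_le _ _
      _ ≤ 2*R + 1 := by linarith
  -- the constant
  set C : ℝ := max (2/δ) (max ((2*R+1)/m) ((2*R+1)/(δ*T/4))) with hC_def
  have hC : 0 < C := lt_of_lt_of_le (by positivity : (0:ℝ) < 2/δ) (le_max_left _ _)
  refine ⟨C, hC, fun x hx => ?_⟩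
  have hρx0 : ρ x < 0 := by rw [hΩρ] at hx; exact hx
  have hρxpos : 0 ≤ -ρ x := by linarith
  have hxR : ‖x‖ ≤ R := by
    have := hclosR (subset_closure hx); rwa [mem_closedBall, dist_zero_right] at this
  by_cases hg : δ ≤ ‖gradient ρ x‖
  · by_cases hsmall : -ρ x ≤ δ*T/4
    · calc Metric.infDist x (frontier Ω) ≤ (2/δ) * (-ρ x) :=
            line_step hρ hΩρ hfr hδ hL hT hT1 hTδ hB hx hxR hg hsmall
        _ ≤ C * (-ρ x) := mul_le_mul_of_nonneg_right (le_max_left _ _) hρxpos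
    · push_neg at hsmall
      have hC3 : (2*R+1)/(δ*T/4) ≤ C := le_trans (le_max_right _ _) (le_max_right _ _)
      have h1 : (2*R+1) ≤ ((2*R+1)/(δ*T/4)) * (-ρ x) := by
        have h2 : ((2*R+1)/(δ*T/4)) * (δ*T/4) = 2*R+1 := by field_simp
        have h3 : ((2*R+1)/(δ*T/4)) * (δ*T/4) ≤ ((2*R+1)/(δ*T/4)) * (-ρ x) :=
          mul_le_mul_of_nonneg_left hsmall.le (by positivity)
        linarith
      calc Metric.infDist x (frontier Ω) ≤ 2*R + 1 := hDbound x hx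
        _ ≤ ((2*R+1)/(δ*T/4)) * (-ρ x) := h1
        _ ≤ C * (-ρ x) := mul_le_mul_of_nonneg_right hC3 hρxpos
  · push_neg at hg
    have hxK' : x ∈ K' := by
      refine ⟨subset_closure hx, ?_⟩
      by_contra hlt
      push_neg at hlt
      have : x ∈ Metric.thickening r₀ (frontier Ω) :=
        (Metric.mem_thickening_iff_infDist_lt hfne).mpr hlt
      exact absurd (hthick this) (by simp only [mem_setOf_eq, not_lt]; exact hg.le)
    have hmx : m ≤ -ρ x := hmle x hxK'
    have hC2 : (2*R+1)/m ≤ C := le_trans (le_max_left _ _) (le_max_right _ _)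
    have h1 : (2*R+1) ≤ ((2*R+1)/m) * (-ρ x) := by
      have h2 : ((2*R+1)/m) * m = 2*R+1 := by field_simp
      have h3 : ((2*R+1)/m) * m ≤ ((2*R+1)/m) * (-ρ x) :=
        mul_le_mul_of_nonneg_left hmx (by positivity)
      linarith
    calc Metric.infDist x (frontier Ω) ≤ 2*R + 1 := hDbound x hx
      _ ≤ ((2*R+1)/m) * (-ρ x) := h1
      _ ≤ C * (-ρ x) := mul_le_mul_of_nonneg_right hC2 hρxpos


/-- (Uniform linear lower bound for solutions with forcing
bounded below.) -/
theorem linear_lower_bound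
    (n : ℕ) (hn : 2 ≤ n)
    (Ω : Set (EuclideanSpace ℝ (Fin n))) (hΩ : IsSmoothBoundedDomain Ω) :
    ∃ c : ℝ, 0 < c ∧
      ∀ c₁ : ℝ, 0 < c₁ →
      ∀ f : ℝ → ℝ, Continuous f → (∀ s : ℝ, 0 ≤ s → c₁ ≤ f s) →
      ∀ u : EuclideanSpace ℝ (Fin n) → ℝ,
        IsClassicalSol Ω f u → (∀ x ∈ Ω, 0 ≤ u x) →
        ∀ x ∈ Ω, c₁ * c * Metric.infDist x (frontier Ω) ≤ u x := by
  obtain ⟨hΩo, hΩb, hΩne, ρ, hρ, hΩρ, hfr, hgrad⟩ := hΩ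
  have hn0 : 0 < n := by omega
  obtain ⟨C, hC, hdist⟩ := dist_le_C_neg_rho hn0 hΩo hΩb hΩne hρ hΩρ hfr hgrad
  obtain ⟨M0, hM0⟩ := (hΩb.isCompact_closure).exists_bound_of_continuousOn
    (continuous_lapl hρ).continuousOn
  set M : ℝ := max M0 1 with hM_def
  have hM : 0 < M := lt_of_lt_of_le one_pos (le_max_right _ _)
  refine ⟨1/(2*M*C), by positivity, ?_⟩
  intro c₁ hc₁ f hf hfge u hu hupos x hx
  obtain ⟨⟨U, hU, hUsub, huC⟩, heq, hbd⟩ := hu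
  set s : ℝ := c₁/(2*M) with hs_def
  have hs : 0 < s := by positivity
  set h : EuclideanSpace ℝ (Fin n) → ℝ := fun y => u y + s * ρ y with hh_def
  have hhC : ContDiffOn ℝ 2 h U :=
    huC.add ((contDiff_const.mul (hρ.of_le (WithTop.coe_le_coe.mpr le_top)) : ContDiff ℝ 2 _).contDiffOn)
  have hlap : ∀ y ∈ Ω, lapl h y < 0 := by
    intro y hy
    rw [hh_def, lapl_add_mul hU huC hρ s (hUsub (subset_closure hy))]
    have h1 : lapl u y + f (u y) = 0 := heq y hy
    have h2 : c₁ ≤ f (u y) := hfge _ (hupos y hy)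
    have h3 : lapl ρ y ≤ M := by
      have := hM0 y (subset_closure hy)
      rw [Real.norm_eq_abs] at this
      have := (abs_le.mp (le_trans this (le_max_left M0 1))).2
      linarith [le_max_left M0 1, abs_le.mp (le_trans (hM0 y (subset_closure hy))
        (le_refl _))]
    have h4 : s * lapl ρ y ≤ s * M := mul_le_mul_of_nonneg_left h3 hs.le
    have h5 : s * M = c₁/2 := by rw [hs_def]; field_simp
    linarith
  have hbd2 : ∀ y ∈ frontier Ω, 0 ≤ h y := by
    intro y hy
    have hρy : ρ y = 0 := by rw [hfr] at hy; exact hy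
    rw [hh_def]
    simp [hbd y hy, hρy]
  have key := min_principle hΩo hΩb hΩne hU hUsub hhC hlap hbd2 x hx
  have hd := hdist x hx
  have hkey : s * (-ρ x) ≤ u x := by
    have : s * (-ρ x) = -(s * ρ x) := by ring
    rw [hh_def] at key
    simp only at key
    linarith
  calc c₁ * (1/(2*M*C)) * Metric.infDist x (frontier Ω)
      ≤ c₁ * (1/(2*M*C)) * (C * (-ρ x)) :=
        mul_le_mul_of_nonneg_left hd (by positivity)
    _ = s * (-ρ x) := by rw [hs_def]; field_simp
    _ ≤ u x := hkey
end
end
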